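/- arXiv:1510.05936 — 5 statements merged into one kernel-verified Lean document; each statement's English description precedes it below -/
import Mathlib

section
/- If Φ(f) = C₁f · C₂f where C₁, C₂ are linear operators from A to Aʳ, then Γ_Φ(f) = Γ(C₁f, C₂f) + (1/2) C₁f·[L,C₂]f + (1/2)[L,C₁]f·C₂f, where Γ is the carré du champ of L extended componentwise and [L,C] denotes componentwise commutators. In particular, if C₁ = C₂ = C, then Γ_{|C·|²}(f) ≥ Cf·[L,C]f. -/
open Finset

section
variable {E ι : Type*} [Fintype ι] {L : (E → ℝ) → E → ℝ}

theorem apply_sum_apply_of_map_add (hLadd : ∀ g h : E → ℝ, L (g + h) = L g + L h)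
    (F : ι → E → ℝ) (x : E) :
    L (fun y => ∑ i, F i y) x = ∑ i, L (F i) x := by
  have hF : (fun y => ∑ i, F i y) = ∑ i, F i := by
    funext y
    rw [Finset.sum_apply]
  rw [hF, ← Finset.sum_apply]
  exact congrFun (map_sum (AddMonoidHom.mk' L hLadd) F univ) x

theorem gammaPhi_mul_eq (hLadd : ∀ g h : E → ℝ, L (g + h) = L g + L h)
    (C₁ C₂ : ι → (E → ℝ) → E → ℝ) (f : E → ℝ) (x : E) :
    (L (fun y => ∑ i, C₁ i f y * C₂ i f y) x
        - ∑ i, (C₁ i f x * C₂ i (L f) x + C₁ i (L f) x * C₂ i f x)) / 2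
      = (∑ i, (L (C₁ i f * C₂ i f) x - C₂ i f x * L (C₁ i f) x
            - C₁ i f x * L (C₂ i f) x) / 2)
        + (1/2) * ∑ i, C₁ i f x * (L (C₂ i f) x - C₂ i (L f) x)
        + (1/2) * ∑ i, (L (C₁ i f) x - C₁ i (L f) x) * C₂ i f x := by
  have hL := apply_sum_apply_of_map_add hLadd (fun i => C₁ i f * C₂ i f) x
  simp only [Pi.mul_apply] at hL
  rw [hL, mul_sum, mul_sum,
    ← sum_sub_distrib, sum_div, ← sum_add_distrib, ← sum_add_distrib]
  refine sum_congr rfl fun i _ => ?_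
  ring

theorem mul_commutator_le_gammaPhi_sq (hLadd : ∀ g h : E → ℝ, L (g + h) = L g + L h)
    (hΓpos : ∀ g : E → ℝ, ∀ x, 0 ≤ (L (g * g) x - 2 * g x * L g x) / 2)
    (C : ι → (E → ℝ) → E → ℝ) (f : E → ℝ) (x : E) :
    ∑ i, C i f x * (L (C i f) x - C i (L f) x)
      ≤ (L (fun y => ∑ i, C i f y * C i f y) x - ∑ i, 2 * C i f x * C i (L f) x) / 2 := by
  have hL := apply_sum_apply_of_map_add hLadd (fun i => C i f * C i f) x
  simp only [Pi.mul_apply] at hL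
  rw [hL, ← sum_sub_distrib, sum_div]
  refine sum_le_sum fun i _ => ?_
  linarith [hΓpos (C i f) x]

end

theorem stmt4_general {E : Type*} (L : (E → ℝ) → E → ℝ) (r : ℕ)
    (C₁ C₂ C : Fin r → (E → ℝ) → E → ℝ)
    (hLadd : ∀ g h : E → ℝ, L (g + h) = L g + L h)
    -- positivity of the carré du champ quadratic form
    (hΓpos : ∀ g : E → ℝ, ∀ x, 0 ≤ (L (g * g) x - 2 * g x * L g x) / 2) :
    -- the identity for `Γ_Φ` with `Φ f = C₁f · C₂f`
    ((∀ f : E → ℝ, ∀ x : E,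
      (L (fun y => ∑ i, C₁ i f y * C₂ i f y) x
          - ∑ i, (C₁ i f x * C₂ i (L f) x + C₁ i (L f) x * C₂ i f x)) / 2
        = (∑ i, (L (C₁ i f * C₂ i f) x - C₂ i f x * L (C₁ i f) x
              - C₁ i f x * L (C₂ i f) x) / 2)
          + (1/2) * ∑ i, C₁ i f x * (L (C₂ i f) x - C₂ i (L f) x)
          + (1/2) * ∑ i, (L (C₁ i f) x - C₁ i (L f) x) * C₂ i f x)
    -- the inequality `Γ_{|C·|²} f ≥ Cf·[L,C]f`
    ∧ (∀ f : E → ℝ, ∀ x : E,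
      ∑ i, C i f x * (L (C i f) x - C i (L f) x)
        ≤ (L (fun y => ∑ i, C i f y * C i f y) x
            - ∑ i, 2 * C i f x * C i (L f) x) / 2)) :=
  ⟨gammaPhi_mul_eq hLadd C₁ C₂, mul_commutator_le_gammaPhi_sq hLadd hΓpos C⟩

/-- quadratic `Φ`'s. If `Φ(f) = C₁f · C₂f` for linear operators
`C₁, C₂ : A → Aʳ`, then
`Γ_Φ(f) = Γ(C₁f, C₂f) + (1/2) C₁f·[L,C₂]f + (1/2)[L,C₁]f·C₂f`,
where `Γ(g,h) = (1/2)(L(gh) − hLg − gLh)` is the carré du champ (extended componentwise),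
and `[L,c]f = L(cf) − c(Lf)`.  In particular, if `C₁ = C₂ = C` then (by positivity of `Γ`)
`Γ_{|C·|²}(f) ≥ Cf·[L,C]f`. -/
theorem stmt4 {E : Type*} (L : (E → ℝ) → E → ℝ) (r : ℕ)
    (C₁ C₂ C : Fin r → (E → ℝ) → E → ℝ)
    (hLadd : ∀ g h : E → ℝ, L (g + h) = L g + L h)
    (hL0 : L 0 = 0)
    -- positivity of the carré du champ quadratic form
    (hΓpos : ∀ g : E → ℝ, ∀ x, 0 ≤ (L (g * g) x - 2 * g x * L g x) / 2) :
    -- the identity for `Γ_Φ` with `Φ f = C₁f · C₂f`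
    ((∀ f : E → ℝ, ∀ x : E,
      (L (fun y => ∑ i, C₁ i f y * C₂ i f y) x
          - ∑ i, (C₁ i f x * C₂ i (L f) x + C₁ i (L f) x * C₂ i f x)) / 2
        = (∑ i, (L (C₁ i f * C₂ i f) x - C₂ i f x * L (C₁ i f) x
              - C₁ i f x * L (C₂ i f) x) / 2)
          + (1/2) * ∑ i, C₁ i f x * (L (C₂ i f) x - C₂ i (L f) x)
          + (1/2) * ∑ i, (L (C₁ i f) x - C₁ i (L f) x) * C₂ i f x)
    -- the inequality `Γ_{|C·|²} f ≥ Cf·[L,C]f`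
    ∧ (∀ f : E → ℝ, ∀ x : E,
      ∑ i, C i f x * (L (C i f) x - C i (L f) x)
        ≤ (L (fun y => ∑ i, C i f y * C i f y) x
            - ∑ i, 2 * C i f x * C i (L f) x) / 2)) :=
  stmt4_general L r C₁ C₂ C hLadd hΓpos
end

section
/- Let L be a diffusion operator with carré du champ Γ, C: A → Aʳ a linear operator, and a: ℝ₊ → ℝ₊ an admissible function (C⁴, with 1/a'' positive and concave). Set Φf = a''(f)|Cf|². Then Γ_Φ(f) ≥ a''(f) Cf·[L,C]f for all f ∈ A₊ with Φf ∈ A₊. -/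
/-!
Write `b₂, b₃, b₄` for `a'', a''', a''''` at `f x` and `cᵢ = Cᵢ f x`. The Leibniz rule and
the chain rules give
`2 (Γ_Φ f - b₂ Cf·[L,C]f) = 2 b₂ Σ Γ(Cᵢ f) + b₄ |Cf|² Γ(f) + 4 b₃ Σ cᵢ Γ(f, Cᵢ f)`.
Concavity of `1/a''` means `2 b₃² ≤ b₂ b₄`, so `b₂` times this is at least
`2 Σ Γ(b₂ Cᵢ f + b₃ cᵢ f) ≥ 0`: Γ is a positive quadratic form, since the chain rule
makes `L` linear over `ℝ`.
-/

open Finset Set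

theorem two_mul_deriv_sq_le_mul_deriv_deriv {g : ℝ → ℝ} (hg : ContDiff ℝ 2 g)
    (hpos : ∀ x, 0 ≤ x → 0 < g x) (hconc : ConcaveOn ℝ (Ici 0) fun x => 1 / g x)
    {t : ℝ} (ht : 0 ≤ t) :
    2 * deriv g t ^ 2 ≤ g t * deriv (deriv g) t := by
  have hg' : ∀ s, HasDerivAt g (deriv g s) s := fun s =>
    ((hg.differentiable two_ne_zero) s).hasDerivAt
  have hg'' : ∀ s, HasDerivAt (deriv g) (deriv (deriv g) s) s := fun s =>
    ((contDiff_succ_iff_deriv.mp hg).2.2.differentiable one_ne_zero s).hasDerivAt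
  have hinv : ∀ s ∈ Ici (0 : ℝ), HasDerivAt (fun x => 1 / g x) (-deriv g s / g s ^ 2) s :=
    fun s hs => by simpa only [one_div] using (hg' s).fun_inv (hpos s hs).ne'
  have hanti : AntitoneOn (fun s => -deriv g s / g s ^ 2) (Ici 0) := fun u hu v hv huv => by
    simpa only [(hinv u hu).deriv, (hinv v hv).deriv] using
      hconc.antitoneOn_deriv (fun s hs => (hinv s hs).differentiableAt) hu hv huv
  have hgt := hpos t ht
  -- The antitone `-g'/g²` has derivative `(2 g g'² - g² g'') / g⁴ ≤ 0` at `t` within `Ici 0`.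
  have hderiv := (hg'' t).fun_neg.fun_div ((hg' t).fun_pow 2) (pow_ne_zero 2 hgt.ne')
  have hnonpos :=
    hderiv.hasDerivWithinAt.nonpos_of_antitoneOn (uniqueDiffOn_Ici 0 t ht).accPt hanti
  rw [div_le_iff₀ (by positivity), zero_mul] at hnonpos
  norm_num at hnonpos
  nlinarith

section

variable {E ι : Type*}

theorem IsLinearMap.map_sum {R M N : Type*} [Semiring R] [AddCommMonoid M] [AddCommMonoid N]
    [Module R M] [Module R N] {f : M → N} (hf : IsLinearMap R f) (s : Finset ι) (g : ι → M) :
    f (∑ i ∈ s, g i) = ∑ i ∈ s, f (g i) :=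
  _root_.map_sum (hf.mk' f) g s

def IsCarreDuChamp (L : (E → ℝ) → E → ℝ) (Γ : (E → ℝ) → (E → ℝ) → E → ℝ) : Prop :=
  ∀ f g : E → ℝ, ∀ x, Γ f g x = (L (f * g) x - g x * L f x - f x * L g x) / 2

theorem isLinearMap_of_chain_rule {L : (E → ℝ) → E → ℝ} {Γ : (E → ℝ) → (E → ℝ) → E → ℝ}
    (hadd : ∀ f g : E → ℝ, L (f + g) = L f + L g)
    (hchain : ∀ u : ℝ → ℝ, ContDiff ℝ 2 u → ∀ f : E → ℝ, ∀ x,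
      L (fun y => u (f y)) x = deriv u (f x) * L f x + deriv (deriv u) (f x) * Γ f f x) :
    IsLinearMap ℝ L where
  map_add := hadd
  map_smul c f := funext fun x => by
    change L (fun y => c * f y) x = c * L f x
    simpa using hchain (c * ·) (contDiff_const.mul contDiff_id) f x

namespace IsCarreDuChamp

variable {L : (E → ℝ) → E → ℝ} {Γ : (E → ℝ) → (E → ℝ) → E → ℝ}

theorem comm (hΓ : IsCarreDuChamp L Γ) (f g : E → ℝ) (x : E) : Γ f g x = Γ g f x := by
  rw [hΓ, hΓ, mul_comm f]
  ring

theorem apply_mul (hΓ : IsCarreDuChamp L Γ) (f g : E → ℝ) (x : E) :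
    L (f * g) x = f x * L g x + g x * L f x + 2 * Γ f g x := by
  rw [hΓ]
  ring

theorem apply_sq (hΓ : IsCarreDuChamp L Γ) (f : E → ℝ) (x : E) :
    L (fun y => f y ^ 2) x = 2 * f x * L f x + 2 * Γ f f x := by
  simp only [sq]
  rw [← Pi.mul_def, hΓ.apply_mul]
  ring

theorem sum_right (hΓ : IsCarreDuChamp L Γ) (hL : IsLinearMap ℝ L) (f : E → ℝ)
    (s : Finset ι) (g : ι → E → ℝ) (x : E) :
    Γ f (∑ i ∈ s, g i) x = ∑ i ∈ s, Γ f (g i) x := by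
  simp only [hΓ _ _ x, mul_sum, hL.map_sum, Finset.sum_apply, ← sum_div, ← sum_sub_distrib,
    sum_mul]

theorem apply_smul_add_smul_self (hΓ : IsCarreDuChamp L Γ) (hL : IsLinearMap ℝ L)
    (α β : ℝ) (f g : E → ℝ) (x : E) :
    Γ (α • f + β • g) (α • f + β • g) x =
      α ^ 2 * Γ f f x + 2 * α * β * Γ f g x + β ^ 2 * Γ g g x := by
  have hprod : (α • f + β • g) * (α • f + β • g) =
      (α ^ 2) • (f * f) + (2 * α * β) • (f * g) + (β ^ 2) • (g * g) := by
    ext y; simp only [Pi.mul_apply, Pi.add_apply, Pi.smul_apply, smul_eq_mul]; ring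
  simp only [hΓ _ _ x, hprod, hL.map_add, hL.map_smul, Pi.add_apply, Pi.smul_apply,
    smul_eq_mul]
  ring

theorem apply_sum_sq (hΓ : IsCarreDuChamp L Γ) (hL : IsLinearMap ℝ L) (h : ι → E → ℝ)
    (s : Finset ι) (x : E) :
    L (fun y => ∑ i ∈ s, h i y ^ 2) x =
      2 * ∑ i ∈ s, h i x * L (h i) x + 2 * ∑ i ∈ s, Γ (h i) (h i) x := by
  have hfun : (fun y => ∑ i ∈ s, h i y ^ 2) = ∑ i ∈ s, fun y => h i y ^ 2 := by
    ext y; rw [Finset.sum_apply]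
  rw [hfun, hL.map_sum, Finset.sum_apply, mul_sum, mul_sum, ← sum_add_distrib]
  refine sum_congr rfl fun i _ => ?_
  rw [hΓ.apply_sq]
  ring

theorem sum_sq_right (hΓ : IsCarreDuChamp L Γ) (hL : IsLinearMap ℝ L)
    (hchainΓ : ∀ u : ℝ → ℝ, ContDiff ℝ 2 u → ∀ f g : E → ℝ, ∀ x,
      Γ (fun y => u (f y)) g x = deriv u (f x) * Γ f g x)
    (f : E → ℝ) (h : ι → E → ℝ) (s : Finset ι) (x : E) :
    Γ f (fun y => ∑ i ∈ s, h i y ^ 2) x = 2 * ∑ i ∈ s, h i x * Γ f (h i) x := by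
  have hfun : (fun y => ∑ i ∈ s, h i y ^ 2) = ∑ i ∈ s, fun y => h i y ^ 2 := by
    ext y; rw [Finset.sum_apply]
  rw [hfun, hΓ.sum_right hL, mul_sum]
  refine sum_congr rfl fun i _ => ?_
  rw [hΓ.comm, hchainΓ (· ^ 2) (contDiff_id.pow 2), hΓ.comm]
  simp only [deriv_pow_field]
  ring

theorem sum_sq_combination_nonneg (hΓ : IsCarreDuChamp L Γ) (hL : IsLinearMap ℝ L)
    (hpos : ∀ f : E → ℝ, ∀ x, 0 ≤ Γ f f x) (b c : ℝ) (f : E → ℝ) (h : ι → E → ℝ)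
    (s : Finset ι) (x : E) :
    0 ≤ b ^ 2 * ∑ i ∈ s, Γ (h i) (h i) x + 2 * b * c * ∑ i ∈ s, h i x * Γ f (h i) x
      + c ^ 2 * (∑ i ∈ s, h i x ^ 2) * Γ f f x := by
  have hterm : ∀ i ∈ s, 0 ≤ b ^ 2 * Γ (h i) (h i) x + 2 * b * c * (h i x * Γ f (h i) x)
      + c ^ 2 * h i x ^ 2 * Γ f f x := fun i _ => by
    have := hpos (b • h i + (c * h i x) • f) x
    rw [hΓ.apply_smul_add_smul_self hL, hΓ.comm (h i) f] at this
    linarith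
  have := sum_nonneg hterm
  simpa only [sum_add_distrib, ← mul_sum, ← sum_mul] using this

theorem apply_comp_mul_sum_sq (hΓ : IsCarreDuChamp L Γ) (hL : IsLinearMap ℝ L)
    (hchain : ∀ u : ℝ → ℝ, ContDiff ℝ 2 u → ∀ f : E → ℝ, ∀ x,
      L (fun y => u (f y)) x = deriv u (f x) * L f x + deriv (deriv u) (f x) * Γ f f x)
    (hchainΓ : ∀ u : ℝ → ℝ, ContDiff ℝ 2 u → ∀ f g : E → ℝ, ∀ x,
      Γ (fun y => u (f y)) g x = deriv u (f x) * Γ f g x)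
    {u : ℝ → ℝ} (hu : ContDiff ℝ 2 u) (f : E → ℝ) (h : ι → E → ℝ) (s : Finset ι) (x : E) :
    L (fun y => u (f y) * ∑ i ∈ s, h i y ^ 2) x =
      deriv u (f x) * L f x * ∑ i ∈ s, h i x ^ 2 + 2 * u (f x) * ∑ i ∈ s, h i x * L (h i) x
        + (2 * u (f x) * ∑ i ∈ s, Γ (h i) (h i) x
          + deriv (deriv u) (f x) * (∑ i ∈ s, h i x ^ 2) * Γ f f x
          + 4 * deriv u (f x) * ∑ i ∈ s, h i x * Γ f (h i) x) := by
  change L ((fun y => u (f y)) * fun y => ∑ i ∈ s, h i y ^ 2) x = _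
  rw [hΓ.apply_mul, hΓ.apply_sum_sq hL, hchain u hu, hchainΓ u hu,
    hΓ.sum_sq_right hL hchainΓ]
  ring

theorem remainder_nonneg (hΓ : IsCarreDuChamp L Γ) (hL : IsLinearMap ℝ L)
    (hpos : ∀ f : E → ℝ, ∀ x, 0 ≤ Γ f f x) {b₂ b₃ b₄ : ℝ} (hb₂ : 0 < b₂)
    (hb : 2 * b₃ ^ 2 ≤ b₂ * b₄) (f : E → ℝ) (h : ι → E → ℝ) (s : Finset ι) (x : E) :
    0 ≤ 2 * b₂ * ∑ i ∈ s, Γ (h i) (h i) x + b₄ * (∑ i ∈ s, h i x ^ 2) * Γ f f x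
      + 4 * b₃ * ∑ i ∈ s, h i x * Γ f (h i) x := by
  have hsq := hΓ.sum_sq_combination_nonneg hL hpos b₂ b₃ f h s x
  have hSG : 0 ≤ (∑ i ∈ s, h i x ^ 2) * Γ f f x :=
    mul_nonneg (sum_nonneg fun i _ => sq_nonneg _) (hpos f x)
  refine (mul_nonneg_iff_of_pos_left hb₂).1 ?_
  linear_combination 2 * hsq + mul_nonneg (sub_nonneg.2 hb) hSG

end IsCarreDuChamp

end

theorem stmt8_general {E : Type*} (L : (E → ℝ) → E → ℝ) (r : ℕ)
    (C : Fin r → (E → ℝ) → E → ℝ)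
    (Γb : (E → ℝ) → (E → ℝ) → E → ℝ)
    -- the carré du champ of `L`
    (hΓdef : ∀ f g : E → ℝ, ∀ x, Γb f g x = (L (f * g) x - g x * L f x - f x * L g x) / 2)
    (hΓpos : ∀ f : E → ℝ, ∀ x, 0 ≤ Γb f f x)
    (hLadd : ∀ f g : E → ℝ, L (f + g) = L f + L g)
    -- the diffusion (chain rule) property of `L`
    (hchain : ∀ u : ℝ → ℝ, ContDiff ℝ 2 u → ∀ f : E → ℝ, ∀ x,
      L (fun y => u (f y)) x = deriv u (f x) * L f x + deriv (deriv u) (f x) * Γb f f x)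
    (hchainΓ : ∀ u : ℝ → ℝ, ContDiff ℝ 2 u → ∀ f g : E → ℝ, ∀ x,
      Γb (fun y => u (f y)) g x = deriv u (f x) * Γb f g x)
    -- `a` is admissible: `C⁴` with `1/a''` positive concave on `ℝ₊`
    (a : ℝ → ℝ) (ha : ContDiff ℝ 4 a)
    (ha'' : ∀ x : ℝ, 0 ≤ x → 0 < iteratedDeriv 2 a x)
    (hconc : ConcaveOn ℝ (Set.Ici (0:ℝ)) fun x => 1 / iteratedDeriv 2 a x)
    -- `f ∈ A₊`
    (f : E → ℝ) (hf : ∀ x, 0 ≤ f x) :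
    ∀ x : E,
      iteratedDeriv 2 a (f x) * ∑ i, C i f x * (L (C i f) x - C i (L f) x)
        ≤ (L (fun y => iteratedDeriv 2 a (f y) * ∑ i, (C i f y) ^ 2) x
            - (iteratedDeriv 3 a (f x) * L f x * ∑ i, (C i f x) ^ 2
              + 2 * iteratedDeriv 2 a (f x) * ∑ i, C i f x * C i (L f) x)) / 2 := by
  intro x
  have hΓ : IsCarreDuChamp L Γb := hΓdef
  have hL := isLinearMap_of_chain_rule hLadd hchain
  have ha₂ : ContDiff ℝ 2 (iteratedDeriv 2 a) := by
    rw [iteratedDeriv_eq_iterate]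
    exact ha.iterate_deriv' 2 2
  have hΦ := hΓ.apply_comp_mul_sum_sq hL hchain hchainΓ ha₂ f (fun i => C i f) univ x
  have hadm := two_mul_deriv_sq_le_mul_deriv_deriv ha₂ ha'' hconc (hf x)
  simp only [← iteratedDeriv_succ] at hΦ hadm
  have hrem := hΓ.remainder_nonneg hL hΓpos (ha'' _ (hf x)) hadm f (fun i => C i f) univ x
  rw [hΦ]
  simp only [mul_sub, sum_sub_distrib]
  linarith

/-- entropic `Φ`'s for diffusions. Let `L` be a diffusion operator
with (bilinear) carré du champ `Γb`, `C : A → Aʳ` a linear operator with components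
`C i`, and `a : ℝ₊ → ℝ₊` an admissible function (`C⁴` with `1/a''` positive concave).
For `Φ f = a''(f)|Cf|²` one has `Γ_Φ(f) ≥ a''(f) Cf·[L,C]f` for `f ∈ A₊` with `Φf ≥ 0`.
Here `Γ_Φ f = (L(Φ f) − dΦ(f)·Lf)/2` with
`dΦ(f)·Lf = a'''(f)·Lf·|Cf|² + 2a''(f) Cf·C(Lf)`. -/
theorem stmt8 {E : Type*} (L : (E → ℝ) → E → ℝ) (r : ℕ)
    (C : Fin r → (E → ℝ) → E → ℝ)
    (Γb : (E → ℝ) → (E → ℝ) → E → ℝ)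
    -- the carré du champ of `L`
    (hΓdef : ∀ f g : E → ℝ, ∀ x, Γb f g x = (L (f * g) x - g x * L f x - f x * L g x) / 2)
    (hΓpos : ∀ f : E → ℝ, ∀ x, 0 ≤ Γb f f x)
    (hLadd : ∀ f g : E → ℝ, L (f + g) = L f + L g)
    (hL0 : L 0 = 0)
    -- the diffusion (chain rule) property of `L`
    (hchain : ∀ u : ℝ → ℝ, ContDiff ℝ 2 u → ∀ f : E → ℝ, ∀ x,
      L (fun y => u (f y)) x = deriv u (f x) * L f x + deriv (deriv u) (f x) * Γb f f x)
    (hchainΓ : ∀ u : ℝ → ℝ, ContDiff ℝ 2 u → ∀ f g : E → ℝ, ∀ x,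
      Γb (fun y => u (f y)) g x = deriv u (f x) * Γb f g x)
    -- `a` is admissible: `C⁴` with `1/a''` positive concave on `ℝ₊`
    (a : ℝ → ℝ) (ha : ContDiff ℝ 4 a)
    (ha'' : ∀ x : ℝ, 0 ≤ x → 0 < iteratedDeriv 2 a x)
    (hconc : ConcaveOn ℝ (Set.Ici (0:ℝ)) fun x => 1 / iteratedDeriv 2 a x)
    -- `f ∈ A₊` with `Φ f ∈ A₊`
    (f : E → ℝ) (hf : ∀ x, 0 ≤ f x)
    (hΦf : ∀ x, 0 ≤ iteratedDeriv 2 a (f x) * ∑ i, (C i f x) ^ 2) :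
    ∀ x : E,
      iteratedDeriv 2 a (f x) * ∑ i, C i f x * (L (C i f) x - C i (L f) x)
        ≤ (L (fun y => iteratedDeriv 2 a (f y) * ∑ i, (C i f y) ^ 2) x
            - (iteratedDeriv 3 a (f x) * L f x * ∑ i, (C i f x) ^ 2
              + 2 * iteratedDeriv 2 a (f x) * ∑ i, C i f x * C i (L f) x)) / 2 :=
  stmt8_general L r C Γb hΓdef hΓpos hLadd hchain hchainΓ a ha ha'' hconc f hf
end

section
/- Let Lf = b(x)·∇f + div(D∇f) on ℝ^d with D = QᵀQ constant positive semidefinite and b smooth, let M be a constant symmetric positive definite matrix with M = PᵀP, and let a be an admissible function. Then for Φ_M(f) = a''(f)(∇f)ᵀM∇f, one has Γ_{Φ_M}(f) ≥ −a''(f)(∇f)ᵀ M J_b ∇f, where J_b is the Jacobian matrix of b. -/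
/-- Partial derivative `∂_i f (x)` on `ℝ^d`. -/
noncomputable def pd {d : ℕ} (i : Fin d) (f : EuclideanSpace ℝ (Fin d) → ℝ)
    (x : EuclideanSpace ℝ (Fin d)) : ℝ :=
  fderiv ℝ f x (EuclideanSpace.single i 1)

/-- The generator `L f = b·∇f + div(D∇f)` with constant diffusion matrix `D`. -/
noncomputable def diffGen {d : ℕ}
    (b : EuclideanSpace ℝ (Fin d) → EuclideanSpace ℝ (Fin d))
    (D : Matrix (Fin d) (Fin d) ℝ) (f : EuclideanSpace ℝ (Fin d) → ℝ)
    (x : EuclideanSpace ℝ (Fin d)) : ℝ :=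
  (∑ i, b x i * pd i f x) + ∑ i, ∑ j, D i j * pd i (pd j f) x

open Finset Set

set_option linter.unusedVariables false
set_option maxHeartbeats 2000000

section Helpers

variable {d : ℕ}


variable {d : ℕ}

lemma sum_swap₂ (φ : Fin d → Fin d → ℝ) :
    ∑ i, ∑ j, φ i j = ∑ i, ∑ j, φ j i :=
  Finset.sum_comm

lemma rot3' (φ : Fin d → Fin d → Fin d → ℝ) :
    ∑ a, ∑ b, ∑ q, φ a b q = ∑ q, ∑ a, ∑ b, φ a b q :=
  calc ∑ a, ∑ b, ∑ q, φ a b q = ∑ a, ∑ q, ∑ b, φ a b q :=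
        Finset.sum_congr rfl fun a _ => Finset.sum_comm
    _ = ∑ q, ∑ a, ∑ b, φ a b q := Finset.sum_comm

lemma rot4' (φ : Fin d → Fin d → Fin d → Fin d → ℝ) :
    ∑ a, ∑ b, ∑ c, ∑ q, φ a b c q = ∑ q, ∑ a, ∑ b, ∑ c, φ a b c q :=
  calc ∑ a, ∑ b, ∑ c, ∑ q, φ a b c q = ∑ a, ∑ q, ∑ b, ∑ c, φ a b c q :=
        Finset.sum_congr rfl fun a _ => rot3' _
    _ = ∑ q, ∑ a, ∑ b, ∑ c, φ a b c q := Finset.sum_comm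

lemma rot5' (φ : Fin d → Fin d → Fin d → Fin d → Fin d → ℝ) :
    ∑ a, ∑ b, ∑ c, ∑ e, ∑ q, φ a b c e q = ∑ q, ∑ a, ∑ b, ∑ c, ∑ e, φ a b c e q :=
  calc ∑ a, ∑ b, ∑ c, ∑ e, ∑ q, φ a b c e q
      = ∑ a, ∑ q, ∑ b, ∑ c, ∑ e, φ a b c e q :=
        Finset.sum_congr rfl fun a _ => rot4' _
    _ = _ := Finset.sum_comm

lemma rot6' (φ : Fin d → Fin d → Fin d → Fin d → Fin d → Fin d → ℝ) :
    ∑ a, ∑ b, ∑ c, ∑ e, ∑ p, ∑ q, φ a b c e p q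
      = ∑ q, ∑ a, ∑ b, ∑ c, ∑ e, ∑ p, φ a b c e p q :=
  calc ∑ a, ∑ b, ∑ c, ∑ e, ∑ p, ∑ q, φ a b c e p q
      = ∑ a, ∑ q, ∑ b, ∑ c, ∑ e, ∑ p, φ a b c e p q :=
        Finset.sum_congr rfl fun a _ => rot5' _
    _ = _ := Finset.sum_comm

lemma rot4_front2 (φ : Fin d → Fin d → Fin d → Fin d → ℝ) :
    ∑ l, ∑ k, ∑ i, ∑ j, φ l k i j = ∑ i, ∑ j, ∑ l, ∑ k, φ l k i j :=
  calc ∑ l, ∑ k, ∑ i, ∑ j, φ l k i j = ∑ j, ∑ l, ∑ k, ∑ i, φ l k i j := rot4' _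
    _ = ∑ j, ∑ i, ∑ l, ∑ k, φ l k i j :=
        Finset.sum_congr rfl fun j _ => rot3' _
    _ = ∑ i, ∑ j, ∑ l, ∑ k, φ l k i j := Finset.sum_comm

lemma rot6_front2 (φ : Fin d → Fin d → Fin d → Fin d → Fin d → Fin d → ℝ) :
    ∑ l, ∑ k, ∑ i, ∑ j, ∑ p, ∑ q, φ l k i j p q
      = ∑ p, ∑ q, ∑ l, ∑ k, ∑ i, ∑ j, φ l k i j p q :=
  calc ∑ l, ∑ k, ∑ i, ∑ j, ∑ p, ∑ q, φ l k i j p q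
      = ∑ q, ∑ l, ∑ k, ∑ i, ∑ j, ∑ p, φ l k i j p q := rot6' _
    _ = ∑ q, ∑ p, ∑ l, ∑ k, ∑ i, ∑ j, φ l k i j p q :=
        Finset.sum_congr rfl fun q _ => rot5' _
    _ = ∑ p, ∑ q, ∑ l, ∑ k, ∑ i, ∑ j, φ l k i j p q := Finset.sum_comm

lemma sum1_mul_const (φ : Fin d → ℝ) (C : ℝ) :
    ∑ k, φ k * C = (∑ k, φ k) * C :=
  (Finset.sum_mul _ _ _).symm

lemma sum2_mul_const (φ : Fin d → Fin d → ℝ) (C : ℝ) :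
    ∑ l, ∑ k, φ l k * C = (∑ l, ∑ k, φ l k) * C := by
  rw [Finset.sum_mul]
  exact Finset.sum_congr rfl fun l _ => (Finset.sum_mul _ _ _).symm

lemma const_mul_sum2 (C : ℝ) (ψ : Fin d → Fin d → ℝ) :
    C * ∑ i, ∑ j, ψ i j = ∑ i, ∑ j, C * ψ i j := by
  rw [Finset.mul_sum]
  exact Finset.sum_congr rfl fun i _ => Finset.mul_sum _ _ _

lemma sum3_const (C : ℝ) (ψ : Fin d → Fin d → Fin d → ℝ) :
    ∑ a, ∑ b, ∑ q, C * ψ a b q = C * ∑ a, ∑ b, ∑ q, ψ a b q := by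
  rw [const_mul_sum2]
  exact Finset.sum_congr rfl fun a _ => Finset.sum_congr rfl fun b _ =>
    (Finset.mul_sum _ _ _).symm

lemma sum4_const (C : ℝ) (ψ : Fin d → Fin d → Fin d → Fin d → ℝ) :
    ∑ l, ∑ k, ∑ i, ∑ j, C * ψ l k i j = C * ∑ l, ∑ k, ∑ i, ∑ j, ψ l k i j := by
  rw [const_mul_sum2]
  exact Finset.sum_congr rfl fun l _ => Finset.sum_congr rfl fun k _ =>
    (const_mul_sum2 C (ψ l k)).symm

lemma sum4_factor (a b : Fin d → Fin d → ℝ) :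
    ∑ l, ∑ k, ∑ i, ∑ j, a k i * b l j = (∑ k, ∑ i, a k i) * (∑ l, ∑ j, b l j) := by
  have h1 : ∀ l, (∑ k, ∑ i, ∑ j, a k i * b l j) = (∑ k, ∑ i, a k i) * (∑ j, b l j) := by
    intro l
    rw [Finset.sum_mul]
    refine Finset.sum_congr rfl fun k _ => ?_
    rw [Finset.sum_mul]
    refine Finset.sum_congr rfl fun i _ => ?_
    rw [Finset.mul_sum]
  calc ∑ l, ∑ k, ∑ i, ∑ j, a k i * b l j
      = ∑ l, (∑ k, ∑ i, a k i) * (∑ j, b l j) := Finset.sum_congr rfl fun l _ => h1 l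
    _ = (∑ k, ∑ i, a k i) * ∑ l, ∑ j, b l j := by rw [Finset.mul_sum]

lemma sum4_factor3 (u v : Fin d → ℝ) (w : Fin d → Fin d → ℝ) :
    ∑ l, ∑ k, ∑ i, ∑ j, u k * (v i * w l j)
      = ((∑ k, u k) * (∑ i, v i)) * (∑ l, ∑ j, w l j) := by
  have hj : ∀ l k i, ∑ j, u k * (v i * w l j) = u k * v i * ∑ j, w l j := by
    intro l k i
    rw [Finset.mul_sum]
    exact Finset.sum_congr rfl fun j _ => by ring
  have hi : ∀ l k, ∑ i, ∑ j, u k * (v i * w l j) = u k * (∑ i, v i) * ∑ j, w l j := by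
    intro l k
    calc ∑ i, ∑ j, u k * (v i * w l j) = ∑ i, u k * v i * ∑ j, w l j :=
          Finset.sum_congr rfl fun i _ => hj l k i
      _ = (∑ i, u k * v i) * ∑ j, w l j := sum1_mul_const _ _
      _ = u k * (∑ i, v i) * ∑ j, w l j :=
          congrArg (· * ∑ j, w l j) (Finset.mul_sum _ _ _).symm
  have hk : ∀ l, ∑ k, ∑ i, ∑ j, u k * (v i * w l j)
      = (∑ k, u k) * (∑ i, v i) * ∑ j, w l j := by
    intro l
    calc ∑ k, ∑ i, ∑ j, u k * (v i * w l j) = ∑ k, u k * ((∑ i, v i) * ∑ j, w l j) :=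
          Finset.sum_congr rfl fun k _ => by rw [hi l k]; ring
      _ = (∑ k, u k) * ((∑ i, v i) * ∑ j, w l j) := sum1_mul_const _ _
      _ = (∑ k, u k) * (∑ i, v i) * ∑ j, w l j := by ring
  calc ∑ l, ∑ k, ∑ i, ∑ j, u k * (v i * w l j)
      = ∑ l, ((∑ k, u k) * (∑ i, v i)) * ∑ j, w l j :=
        Finset.sum_congr rfl fun l _ => hk l
    _ = ((∑ k, u k) * (∑ i, v i)) * ∑ l, ∑ j, w l j :=
        (Finset.mul_sum _ _ _).symm

lemma toy (α2 α3 α4 s t c : ℝ) (h2 : 0 < α2) (h24 : 2*α3^2 ≤ α2*α4)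
    (hs : 0 ≤ s) (ht : 0 ≤ t) (hc : c^2 ≤ t*s) : 0 ≤ α4*s + 4*α3*c + 2*α2*t := by
  have hy : 0 ≤ α3^2*s + 2*α2*(α3*c) + α2^2*t := by
    rcases le_or_gt 0 (α3*c) with h | h
    · nlinarith [mul_nonneg (sq_nonneg α3) hs, mul_nonneg (sq_nonneg α2) ht,
        mul_nonneg h2.le h]
    · have hX : 0 ≤ α3^2*s + α2^2*t :=
        add_nonneg (mul_nonneg (sq_nonneg α3) hs) (mul_nonneg (sq_nonneg α2) ht)
      have hsq : (α3^2*s + α2^2*t)^2 ≥ (2*α2*(α3*c))^2 := by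
        nlinarith [sq_nonneg (α3^2*s - α2^2*t),
          mul_nonneg (mul_nonneg (sq_nonneg α2) (sq_nonneg α3)) (sub_nonneg.mpr hc)]
      nlinarith [hsq, hX]
  have hmul : 0 ≤ α2 * (α4*s + 4*α3*c + 2*α2*t) := by
    nlinarith [mul_nonneg hs (sub_nonneg.mpr h24)]
  nlinarith [hmul, h2]

theorem key_algebra (M D Pm Q : Matrix (Fin d) (Fin d) ℝ)
    (hM : M = Pm.transpose * Pm) (hD : D = Q.transpose * Q)
    (F : Fin d → ℝ) (H : Fin d → Fin d → ℝ) (T : Fin d → Fin d → Fin d → ℝ)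
    (Bm : Fin d → Fin d → ℝ) (bb : Fin d → ℝ)
    (Hsym : ∀ i j, H i j = H j i)
    (Tsym12 : ∀ p q r, T p q r = T q p r) (Tsym23 : ∀ p q r, T p q r = T p r q)
    (α2 α3 α4 : ℝ) (hα2 : 0 < α2) (h24 : 2 * α3 ^ 2 ≤ α2 * α4) :
    -α2 * ∑ i, ∑ k, F i * (∑ j, M i j * Bm j k) * F k ≤
      ((∑ k, bb k * (α3 * F k * (∑ i, ∑ j, M i j * F i * F j)
          + α2 * ∑ i, ∑ j, M i j * (H k i * F j + F i * H k j)))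
        + (∑ l, ∑ k, D l k *
            (α4 * F l * F k * (∑ i, ∑ j, M i j * F i * F j)
             + α3 * (H l k * (∑ i, ∑ j, M i j * F i * F j)
                 + F k * (∑ i, ∑ j, M i j * (H l i * F j + F i * H l j))
                 + F l * (∑ i, ∑ j, M i j * (H k i * F j + F i * H k j)))
             + α2 * ∑ i, ∑ j, M i j *
                 (T l k i * F j + H k i * H l j + H l i * H k j + F i * T l k j)))
        - (α3 * ((∑ k, bb k * F k) + ∑ i, ∑ j, D i j * H i j)
              * (∑ i, ∑ j, M i j * F i * F j)
          + 2 * α2 * ∑ i, ∑ j, M i j * F i *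
              ((∑ k, (Bm j k * F k + bb k * H j k)) + ∑ k, ∑ l, D k l * T j k l))) / 2 := by
  have hMa : ∀ i j, M i j = ∑ r, Pm r i * Pm r j := by
    intro i j; rw [hM]; simp [Matrix.mul_apply, Matrix.transpose_apply]
  have hDa : ∀ i j, D i j = ∑ q, Q q i * Q q j := by
    intro i j; rw [hD]; simp [Matrix.mul_apply, Matrix.transpose_apply]
  have Msym : ∀ i j, M i j = M j i := by
    intro i j; rw [hMa, hMa]; exact Finset.sum_congr rfl fun r _ => mul_comm _ _
  have Dsym : ∀ i j, D i j = D j i := by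
    intro i j; rw [hDa, hDa]; exact Finset.sum_congr rfl fun r _ => mul_comm _ _
  have Tperm : ∀ p q r, T p q r = T r q p := by
    intro p q r; rw [Tsym23, Tsym12, Tsym23]
  set g := ∑ i, ∑ j, M i j * F i * F j with hgdef
  set P1 := ∑ k, bb k * F k with hP1def
  set P2 := ∑ i, ∑ j, D i j * H i j with hP2def
  have Gsub : ∀ k, (∑ i, ∑ j, M i j * (H k i * F j + F i * H k j))
      = 2 * ∑ i, ∑ j, M i j * (F i * H k j) := by
    intro k
    have h1 : ∑ i, ∑ j, M i j * (H k i * F j) = ∑ i, ∑ j, M i j * (F i * H k j) := by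
      rw [sum_swap₂ (fun i j => M i j * (H k i * F j))]
      exact Finset.sum_congr rfl fun i _ => Finset.sum_congr rfl fun j _ => by
        rw [Msym j i]; ring
    calc ∑ i, ∑ j, M i j * (H k i * F j + F i * H k j)
        = (∑ i, ∑ j, M i j * (H k i * F j)) + ∑ i, ∑ j, M i j * (F i * H k j) := by
          simp only [mul_add, Finset.sum_add_distrib]
      _ = 2 * ∑ i, ∑ j, M i j * (F i * H k j) := by rw [h1]; ring
  -- canonical quantities
  set sD := ∑ l, ∑ k, D l k * F l * F k with hsDdef
  set W := ∑ i, ∑ j, ∑ k, M i j * F i * (bb k * H j k) with hWdef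
  set BmS := ∑ i, ∑ j, ∑ k, M i j * F i * (Bm j k * F k) with hBmSdef
  set U := ∑ i, ∑ j, ∑ k, ∑ l, M i j * F i * (D k l * T j k l) with hUdef
  set c := ∑ l, ∑ k, ∑ i, ∑ j, D l k * F k * (M i j * F i * H l j) with hcdef
  set t := ∑ l, ∑ k, ∑ i, ∑ j, D l k * (M i j * (H k i * H l j)) with htdef
  -- Component I1
  have I1 : (∑ k, bb k * (α3 * F k * g
        + α2 * ∑ i, ∑ j, M i j * (H k i * F j + F i * H k j)))
      = α3 * P1 * g + 2 * α2 * W := by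
    have step1 : ∀ k, bb k * (α3 * F k * g
          + α2 * ∑ i, ∑ j, M i j * (H k i * F j + F i * H k j))
        = bb k * F k * (α3 * g)
          + ∑ i, ∑ j, (2 * α2) * (M i j * F i * (bb k * H j k)) := by
      intro k
      have h2 : (2 * α2 * bb k) * (∑ i, ∑ j, M i j * (F i * H k j))
          = ∑ i, ∑ j, (2 * α2) * (M i j * F i * (bb k * H j k)) := by
        rw [const_mul_sum2]
        exact Finset.sum_congr rfl fun i _ => Finset.sum_congr rfl fun j _ => by
          rw [Hsym k j]; ring
      calc bb k * (α3 * F k * g + α2 * ∑ i, ∑ j, M i j * (H k i * F j + F i * H k j))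
          = bb k * F k * (α3 * g)
            + (2 * α2 * bb k) * (∑ i, ∑ j, M i j * (F i * H k j)) := by
            rw [Gsub k]; ring
        _ = _ := by rw [h2]
    calc (∑ k, bb k * (α3 * F k * g
          + α2 * ∑ i, ∑ j, M i j * (H k i * F j + F i * H k j)))
        = ∑ k, (bb k * F k * (α3 * g)
            + ∑ i, ∑ j, (2 * α2) * (M i j * F i * (bb k * H j k))) :=
          Finset.sum_congr rfl fun k _ => step1 k
      _ = (∑ k, bb k * F k * (α3 * g))
            + ∑ k, ∑ i, ∑ j, (2 * α2) * (M i j * F i * (bb k * H j k)) :=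
          Finset.sum_add_distrib
      _ = α3 * P1 * g + 2 * α2 * W := by
          congr 1
          · rw [sum1_mul_const (fun k => bb k * F k) (α3 * g), ← hP1def]; ring
          · rw [← rot3' (fun i j k => (2 * α2) * (M i j * F i * (bb k * H j k))),
              sum3_const, ← hWdef]
  -- Component I3
  have I3 : (∑ i, ∑ j, M i j * F i *
        ((∑ k, (Bm j k * F k + bb k * H j k)) + ∑ k, ∑ l, D k l * T j k l))
      = BmS + W + U := by
    have step : ∀ i j, M i j * F i *
          ((∑ k, (Bm j k * F k + bb k * H j k)) + ∑ k, ∑ l, D k l * T j k l)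
        = (∑ k, M i j * F i * (Bm j k * F k)) + (∑ k, M i j * F i * (bb k * H j k))
          + ∑ k, ∑ l, M i j * F i * (D k l * T j k l) := by
      intro i j
      rw [Finset.sum_add_distrib]
      rw [mul_add, mul_add, ← Finset.mul_sum, ← Finset.mul_sum, ← const_mul_sum2]
    calc (∑ i, ∑ j, M i j * F i *
          ((∑ k, (Bm j k * F k + bb k * H j k)) + ∑ k, ∑ l, D k l * T j k l))
        = ∑ i, ∑ j, ((∑ k, M i j * F i * (Bm j k * F k))
            + (∑ k, M i j * F i * (bb k * H j k))
            + ∑ k, ∑ l, M i j * F i * (D k l * T j k l)) :=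
          Finset.sum_congr rfl fun i _ => Finset.sum_congr rfl fun j _ => step i j
      _ = BmS + W + U := by
          simp only [Finset.sum_add_distrib]
          rw [hBmSdef, hWdef, hUdef]
  -- Goal LHS identification
  have hGoalL : (∑ i, ∑ k, F i * (∑ j, M i j * Bm j k) * F k) = BmS := by
    have step : ∀ i k, F i * (∑ j, M i j * Bm j k) * F k
        = ∑ j, M i j * F i * (Bm j k * F k) := by
      intro i k
      rw [Finset.mul_sum, Finset.sum_mul]
      exact Finset.sum_congr rfl fun j _ => by ring
    calc (∑ i, ∑ k, F i * (∑ j, M i j * Bm j k) * F k)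
        = ∑ i, ∑ k, ∑ j, M i j * F i * (Bm j k * F k) :=
          Finset.sum_congr rfl fun i _ => Finset.sum_congr rfl fun k _ => step i k
      _ = BmS := by
          rw [hBmSdef]
          exact Finset.sum_congr rfl fun i _ => Finset.sum_comm
  -- Component I2
  have hTE : (∑ l, ∑ k, ∑ i, ∑ j, D l k * (M i j * (F i * T l k j))) = U := by
    rw [rot4_front2 (fun l k i j => D l k * (M i j * (F i * T l k j))), hUdef]
    refine Finset.sum_congr rfl fun i _ => Finset.sum_congr rfl fun j _ =>
      Finset.sum_congr rfl fun l _ => Finset.sum_congr rfl fun k _ => ?_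
    rw [Tsym12 l k j, Tperm k l j]
    ring
  have hTA : (∑ l, ∑ k, ∑ i, ∑ j, D l k * (M i j * (T l k i * F j))) = U := by
    have hswap : ∀ l k, (∑ i, ∑ j, D l k * (M i j * (T l k i * F j)))
        = ∑ i, ∑ j, D l k * (M i j * (F i * T l k j)) := by
      intro l k
      rw [sum_swap₂ (fun i j => D l k * (M i j * (T l k i * F j)))]
      exact Finset.sum_congr rfl fun i _ => Finset.sum_congr rfl fun j _ => by
        rw [Msym j i]; ring
    calc (∑ l, ∑ k, ∑ i, ∑ j, D l k * (M i j * (T l k i * F j)))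
        = ∑ l, ∑ k, ∑ i, ∑ j, D l k * (M i j * (F i * T l k j)) :=
          Finset.sum_congr rfl fun l _ => Finset.sum_congr rfl fun k _ => hswap l k
      _ = U := hTE
  have hTC : (∑ l, ∑ k, ∑ i, ∑ j, D l k * (M i j * (H l i * H k j))) = t := by
    rw [htdef]
    refine Finset.sum_congr rfl fun l _ => Finset.sum_congr rfl fun k _ => ?_
    rw [sum_swap₂ (fun i j => D l k * (M i j * (H l i * H k j)))]
    exact Finset.sum_congr rfl fun i _ => Finset.sum_congr rfl fun j _ => by
      rw [Msym j i]; ring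
  have hc'' : (∑ l, ∑ k, ∑ i, ∑ j, D l k * F l * (M i j * F i * H k j)) = c := by
    rw [hcdef, sum_swap₂ (fun l k => ∑ i, ∑ j, D l k * F l * (M i j * F i * H k j))]
    exact Finset.sum_congr rfl fun l _ => Finset.sum_congr rfl fun k _ =>
      Finset.sum_congr rfl fun i _ => Finset.sum_congr rfl fun j _ => by
        rw [Dsym k l]
  have I2 : (∑ l, ∑ k, D l k *
        (α4 * F l * F k * g
         + α3 * (H l k * g
             + F k * (∑ i, ∑ j, M i j * (H l i * F j + F i * H l j))
             + F l * (∑ i, ∑ j, M i j * (H k i * F j + F i * H k j)))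
         + α2 * ∑ i, ∑ j, M i j *
             (T l k i * F j + H k i * H l j + H l i * H k j + F i * T l k j)))
      = α4 * sD * g + α3 * P2 * g + 4 * α3 * c + 2 * α2 * t + 2 * α2 * U := by
    have step1 : ∀ l k, D l k *
          (α4 * F l * F k * g
           + α3 * (H l k * g
               + F k * (∑ i, ∑ j, M i j * (H l i * F j + F i * H l j))
               + F l * (∑ i, ∑ j, M i j * (H k i * F j + F i * H k j)))
           + α2 * ∑ i, ∑ j, M i j *
               (T l k i * F j + H k i * H l j + H l i * H k j + F i * T l k j))
        = D l k * F l * F k * (α4 * g) + D l k * H l k * (α3 * g)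
          + (∑ i, ∑ j, (2 * α3) * (D l k * F k * (M i j * F i * H l j)))
          + (∑ i, ∑ j, (2 * α3) * (D l k * F l * (M i j * F i * H k j)))
          + ∑ i, ∑ j, α2 * (D l k *
              (M i j * (T l k i * F j + H k i * H l j + H l i * H k j + F i * T l k j))) := by
      intro l k
      have e3 : (2 * α3 * (D l k * F k)) * (∑ i, ∑ j, M i j * (F i * H l j))
          = ∑ i, ∑ j, (2 * α3) * (D l k * F k * (M i j * F i * H l j)) := by
        rw [const_mul_sum2]
        exact Finset.sum_congr rfl fun i _ => Finset.sum_congr rfl fun j _ => by ring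
      have e4 : (2 * α3 * (D l k * F l)) * (∑ i, ∑ j, M i j * (F i * H k j))
          = ∑ i, ∑ j, (2 * α3) * (D l k * F l * (M i j * F i * H k j)) := by
        rw [const_mul_sum2]
        exact Finset.sum_congr rfl fun i _ => Finset.sum_congr rfl fun j _ => by ring
      have e5 : (α2 * D l k) * (∑ i, ∑ j, M i j *
            (T l k i * F j + H k i * H l j + H l i * H k j + F i * T l k j))
          = ∑ i, ∑ j, α2 * (D l k * (M i j *
              (T l k i * F j + H k i * H l j + H l i * H k j + F i * T l k j))) := by
        rw [const_mul_sum2]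
        exact Finset.sum_congr rfl fun i _ => Finset.sum_congr rfl fun j _ => by ring
      calc D l k *
            (α4 * F l * F k * g
             + α3 * (H l k * g
                 + F k * (∑ i, ∑ j, M i j * (H l i * F j + F i * H l j))
                 + F l * (∑ i, ∑ j, M i j * (H k i * F j + F i * H k j)))
             + α2 * ∑ i, ∑ j, M i j *
                 (T l k i * F j + H k i * H l j + H l i * H k j + F i * T l k j))
          = D l k * F l * F k * (α4 * g) + D l k * H l k * (α3 * g)
            + (2 * α3 * (D l k * F k)) * (∑ i, ∑ j, M i j * (F i * H l j))
            + (2 * α3 * (D l k * F l)) * (∑ i, ∑ j, M i j * (F i * H k j))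
            + (α2 * D l k) * (∑ i, ∑ j, M i j *
                (T l k i * F j + H k i * H l j + H l i * H k j + F i * T l k j)) := by
            rw [Gsub l, Gsub k]; ring
        _ = _ := by rw [e3, e4, e5]
    have step5 : (∑ l, ∑ k, ∑ i, ∑ j, α2 * (D l k * (M i j *
          (T l k i * F j + H k i * H l j + H l i * H k j + F i * T l k j))))
        = 2 * α2 * t + 2 * α2 * U := by
      have split : ∀ l k i j, α2 * (D l k * (M i j *
            (T l k i * F j + H k i * H l j + H l i * H k j + F i * T l k j)))
          = α2 * (D l k * (M i j * (T l k i * F j)))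
            + α2 * (D l k * (M i j * (H k i * H l j)))
            + α2 * (D l k * (M i j * (H l i * H k j)))
            + α2 * (D l k * (M i j * (F i * T l k j))) := by
        intro l k i j; ring
      calc (∑ l, ∑ k, ∑ i, ∑ j, α2 * (D l k * (M i j *
            (T l k i * F j + H k i * H l j + H l i * H k j + F i * T l k j))))
          = ∑ l, ∑ k, ∑ i, ∑ j, (α2 * (D l k * (M i j * (T l k i * F j)))
              + α2 * (D l k * (M i j * (H k i * H l j)))
              + α2 * (D l k * (M i j * (H l i * H k j)))
              + α2 * (D l k * (M i j * (F i * T l k j)))) :=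
            Finset.sum_congr rfl fun l _ => Finset.sum_congr rfl fun k _ =>
              Finset.sum_congr rfl fun i _ => Finset.sum_congr rfl fun j _ => split l k i j
        _ = (∑ l, ∑ k, ∑ i, ∑ j, α2 * (D l k * (M i j * (T l k i * F j))))
            + (∑ l, ∑ k, ∑ i, ∑ j, α2 * (D l k * (M i j * (H k i * H l j))))
            + (∑ l, ∑ k, ∑ i, ∑ j, α2 * (D l k * (M i j * (H l i * H k j))))
            + ∑ l, ∑ k, ∑ i, ∑ j, α2 * (D l k * (M i j * (F i * T l k j))) := by
            simp only [Finset.sum_add_distrib]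
        _ = α2 * U + α2 * t + α2 * t + α2 * U := by
            rw [sum4_const α2 (fun l k i j => D l k * (M i j * (T l k i * F j))), hTA]
            rw [sum4_const α2 (fun l k i j => D l k * (M i j * (H k i * H l j))), ← htdef]
            rw [sum4_const α2 (fun l k i j => D l k * (M i j * (H l i * H k j))), hTC]
            rw [sum4_const α2 (fun l k i j => D l k * (M i j * (F i * T l k j))), hTE]
        _ = 2 * α2 * t + 2 * α2 * U := by ring
    calc (∑ l, ∑ k, D l k *
          (α4 * F l * F k * g
           + α3 * (H l k * g
               + F k * (∑ i, ∑ j, M i j * (H l i * F j + F i * H l j))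
               + F l * (∑ i, ∑ j, M i j * (H k i * F j + F i * H k j)))
           + α2 * ∑ i, ∑ j, M i j *
               (T l k i * F j + H k i * H l j + H l i * H k j + F i * T l k j)))
        = ∑ l, ∑ k, (D l k * F l * F k * (α4 * g) + D l k * H l k * (α3 * g)
            + (∑ i, ∑ j, (2 * α3) * (D l k * F k * (M i j * F i * H l j)))
            + (∑ i, ∑ j, (2 * α3) * (D l k * F l * (M i j * F i * H k j)))
            + ∑ i, ∑ j, α2 * (D l k *
                (M i j * (T l k i * F j + H k i * H l j + H l i * H k j + F i * T l k j)))) :=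
          Finset.sum_congr rfl fun l _ => Finset.sum_congr rfl fun k _ => step1 l k
      _ = (∑ l, ∑ k, D l k * F l * F k * (α4 * g))
          + (∑ l, ∑ k, D l k * H l k * (α3 * g))
          + (∑ l, ∑ k, ∑ i, ∑ j, (2 * α3) * (D l k * F k * (M i j * F i * H l j)))
          + (∑ l, ∑ k, ∑ i, ∑ j, (2 * α3) * (D l k * F l * (M i j * F i * H k j)))
          + ∑ l, ∑ k, ∑ i, ∑ j, α2 * (D l k *
              (M i j * (T l k i * F j + H k i * H l j + H l i * H k j + F i * T l k j))) := by
          simp only [Finset.sum_add_distrib]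
      _ = α4 * sD * g + α3 * P2 * g + 4 * α3 * c + 2 * α2 * t + 2 * α2 * U := by
          rw [sum2_mul_const (fun l k => D l k * F l * F k) (α4 * g), ← hsDdef]
          rw [sum2_mul_const (fun l k => D l k * H l k) (α3 * g), ← hP2def]
          rw [sum4_const (2 * α3) (fun l k i j => D l k * F k * (M i j * F i * H l j)), ← hcdef]
          rw [sum4_const (2 * α3) (fun l k i j => D l k * F l * (M i j * F i * H k j)), hc'']
          rw [step5]
          ring
  -- Positivity data
  have hgrep : g = ∑ r, (∑ i, Pm r i * F i) ^ 2 := by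
    calc g = ∑ i, ∑ j, ∑ r, (Pm r i * F i) * (Pm r j * F j) := by
          rw [hgdef]
          refine Finset.sum_congr rfl fun i _ => Finset.sum_congr rfl fun j _ => ?_
          rw [hMa i j, Finset.sum_mul, Finset.sum_mul]
          exact Finset.sum_congr rfl fun r _ => by ring
      _ = ∑ r, ∑ i, ∑ j, (Pm r i * F i) * (Pm r j * F j) :=
          rot3' (fun i j r => (Pm r i * F i) * (Pm r j * F j))
      _ = ∑ r, (∑ i, Pm r i * F i) ^ 2 := by
          refine Finset.sum_congr rfl fun r _ => ?_
          rw [← Finset.sum_mul_sum]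
          ring
  have hsDrep : sD = ∑ q, (∑ l, Q q l * F l) ^ 2 := by
    calc sD = ∑ l, ∑ k, ∑ q, (Q q l * F l) * (Q q k * F k) := by
          rw [hsDdef]
          refine Finset.sum_congr rfl fun l _ => Finset.sum_congr rfl fun k _ => ?_
          rw [hDa l k, Finset.sum_mul, Finset.sum_mul]
          exact Finset.sum_congr rfl fun q _ => by ring
      _ = ∑ q, ∑ l, ∑ k, (Q q l * F l) * (Q q k * F k) :=
          rot3' (fun l k q => (Q q l * F l) * (Q q k * F k))
      _ = ∑ q, (∑ l, Q q l * F l) ^ 2 := by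
          refine Finset.sum_congr rfl fun q _ => ?_
          rw [← Finset.sum_mul_sum]
          ring
  have htrep : t = ∑ p, ∑ r, (∑ k, ∑ i, Q p k * (Pm r i * H k i))
      * (∑ l, ∑ j, Q p l * (Pm r j * H l j)) := by
    calc t = ∑ l, ∑ k, ∑ i, ∑ j, ∑ p, ∑ r,
          (Q p k * (Pm r i * H k i)) * (Q p l * (Pm r j * H l j)) := by
          rw [htdef]
          refine Finset.sum_congr rfl fun l _ => Finset.sum_congr rfl fun k _ =>
            Finset.sum_congr rfl fun i _ => Finset.sum_congr rfl fun j _ => ?_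
          rw [hDa l k, hMa i j, Finset.sum_mul]
          refine Finset.sum_congr rfl fun p _ => ?_
          rw [mul_comm (∑ r, Pm r i * Pm r j) (H k i * H l j), ← mul_assoc,
            Finset.mul_sum]
          exact Finset.sum_congr rfl fun r _ => by ring
      _ = ∑ p, ∑ r, ∑ l, ∑ k, ∑ i, ∑ j,
          (Q p k * (Pm r i * H k i)) * (Q p l * (Pm r j * H l j)) :=
          rot6_front2 _
      _ = _ := Finset.sum_congr rfl fun p _ => Finset.sum_congr rfl fun r _ =>
          sum4_factor (fun k i => Q p k * (Pm r i * H k i))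
            (fun l j => Q p l * (Pm r j * H l j))
  have hcrep : c = ∑ p, ∑ r, ((∑ k, Q p k * F k) * (∑ i, Pm r i * F i))
      * (∑ l, ∑ j, Q p l * (Pm r j * H l j)) := by
    calc c = ∑ l, ∑ k, ∑ i, ∑ j, ∑ p, ∑ r,
          (Q p k * F k) * ((Pm r i * F i) * (Q p l * (Pm r j * H l j))) := by
          rw [hcdef]
          refine Finset.sum_congr rfl fun l _ => Finset.sum_congr rfl fun k _ =>
            Finset.sum_congr rfl fun i _ => Finset.sum_congr rfl fun j _ => ?_
          rw [hDa l k, hMa i j]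
          rw [show (∑ p, Q p l * Q p k) * F k * ((∑ r, Pm r i * Pm r j) * F i * H l j)
              = (∑ p, Q p l * Q p k) * ((∑ r, Pm r i * Pm r j) * (F k * F i * H l j))
              from by ring]
          rw [Finset.sum_mul]
          refine Finset.sum_congr rfl fun p _ => ?_
          rw [show Q p l * Q p k * ((∑ r, Pm r i * Pm r j) * (F k * F i * H l j))
              = (∑ r, Pm r i * Pm r j) * (Q p l * Q p k * (F k * F i * H l j))
              from by ring]
          rw [Finset.sum_mul]
          exact Finset.sum_congr rfl fun r _ => by ring
      _ = ∑ p, ∑ r, ∑ l, ∑ k, ∑ i, ∑ j,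
          (Q p k * F k) * ((Pm r i * F i) * (Q p l * (Pm r j * H l j))) :=
          rot6_front2 _
      _ = _ := Finset.sum_congr rfl fun p _ => Finset.sum_congr rfl fun r _ =>
          sum4_factor3 (fun k => Q p k * F k) (fun i => Pm r i * F i)
            (fun l j => Q p l * (Pm r j * H l j))
  -- Cauchy–Schwarz
  have hgnn : 0 ≤ g := by
    rw [hgrep]; exact Finset.sum_nonneg fun r _ => sq_nonneg _
  have hsDnn : 0 ≤ sD := by
    rw [hsDrep]; exact Finset.sum_nonneg fun q _ => sq_nonneg _
  have htnn : 0 ≤ t := by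
    rw [htrep]
    refine Finset.sum_nonneg fun p _ => Finset.sum_nonneg fun r _ => ?_
    have : (∑ k, ∑ i, Q p k * (Pm r i * H k i)) = (∑ l, ∑ j, Q p l * (Pm r j * H l j)) := rfl
    rw [← this]
    exact mul_self_nonneg _
  have hCS : c ^ 2 ≤ t * (sD * g) := by
    have hcp : c = ∑ x : Fin d × Fin d,
        (∑ k, ∑ i, Q x.1 k * (Pm x.2 i * H k i))
          * ((∑ k, Q x.1 k * F k) * (∑ i, Pm x.2 i * F i)) := by
      rw [hcrep, ← Finset.univ_product_univ, Finset.sum_product]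
      exact Finset.sum_congr rfl fun p _ => Finset.sum_congr rfl fun r _ => by ring
    have htp : t = ∑ x : Fin d × Fin d,
        (∑ k, ∑ i, Q x.1 k * (Pm x.2 i * H k i)) ^ 2 := by
      rw [htrep, ← Finset.univ_product_univ, Finset.sum_product]
      exact Finset.sum_congr rfl fun p _ => Finset.sum_congr rfl fun r _ => by ring
    have hsg : sD * g = ∑ x : Fin d × Fin d,
        ((∑ k, Q x.1 k * F k) * (∑ i, Pm x.2 i * F i)) ^ 2 := by
      rw [hsDrep, hgrep, Finset.sum_mul_sum, ← Finset.univ_product_univ, Finset.sum_product]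
      exact Finset.sum_congr rfl fun p _ => Finset.sum_congr rfl fun r _ => by ring
    calc c ^ 2 = (∑ x : Fin d × Fin d,
          (∑ k, ∑ i, Q x.1 k * (Pm x.2 i * H k i))
            * ((∑ k, Q x.1 k * F k) * (∑ i, Pm x.2 i * F i))) ^ 2 := by rw [hcp]
      _ ≤ (∑ x : Fin d × Fin d, (∑ k, ∑ i, Q x.1 k * (Pm x.2 i * H k i)) ^ 2)
          * ∑ x : Fin d × Fin d, ((∑ k, Q x.1 k * F k) * (∑ i, Pm x.2 i * F i)) ^ 2 :=
          Finset.sum_mul_sq_le_sq_mul_sq _ _ _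
      _ = t * (sD * g) := by rw [← htp, ← hsg]
  have hkey : 0 ≤ α4 * (sD * g) + 4 * α3 * c + 2 * α2 * t :=
    toy α2 α3 α4 (sD * g) t c hα2 h24 (mul_nonneg hsDnn hgnn) htnn hCS
  rw [hGoalL, I1, I2, I3]
  nlinarith [hkey]


lemma antitoneOn_hasDerivAt_nonpos {G : ℝ → ℝ} {y G' : ℝ}
    (hA : AntitoneOn G (Ici 0)) (hy : 0 ≤ y) (hG : HasDerivAt G G' y) : G' ≤ 0 := by
  have h := (hG.hasDerivWithinAt (s := Ioi y))
  have htend := (hasDerivWithinAt_iff_tendsto_slope' (s := Ioi y) (f := G) (x := y)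
      notMem_Ioi_self).mp h
  refine le_of_tendsto htend ?_
  filter_upwards [self_mem_nhdsWithin] with t ht
  have hty : y < t := ht
  rw [slope_def_field]
  apply div_nonpos_of_nonpos_of_nonneg
  · have := hA (mem_Ici.mpr hy) (mem_Ici.mpr (hy.trans hty.le)) hty.le
    linarith
  · linarith

lemma concave_second_ineq (a : ℝ → ℝ) (ha : ContDiff ℝ 4 a)
    (ha'' : ∀ y : ℝ, 0 ≤ y → 0 < iteratedDeriv 2 a y)
    (hconc : ConcaveOn ℝ (Set.Ici (0:ℝ)) fun t => 1 / iteratedDeriv 2 a t)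
    {y : ℝ} (hy : 0 ≤ y) :
    2 * (iteratedDeriv 3 a y)^2 ≤ iteratedDeriv 2 a y * iteratedDeriv 4 a y := by
  set u2 := iteratedDeriv 2 a with hu2def
  set u3 := iteratedDeriv 3 a with hu3def
  set u4 := iteratedDeriv 4 a with hu4def
  -- smoothness
  have h3 : ContDiff ℝ 3 (deriv a) := by
    have := (contDiff_succ_iff_deriv (n := 3)).mp (by exact_mod_cast ha)
    exact this.2.2
  have h2 : ContDiff ℝ 2 u2 := by
    have := (contDiff_succ_iff_deriv (n := 2)).mp (by exact_mod_cast h3)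
    have h := this.2.2
    rw [hu2def, iteratedDeriv_succ, iteratedDeriv_one]
    exact h
  have h1 : ContDiff ℝ 1 u3 := by
    have := (contDiff_succ_iff_deriv (n := 1)).mp (by exact_mod_cast h2)
    have h := this.2.2
    rw [hu3def, iteratedDeriv_succ]
    exact h
  have hd2 : ∀ t : ℝ, HasDerivAt u2 (u3 t) t := by
    intro t
    have : DifferentiableAt ℝ u2 t := (h2.differentiable (by norm_num)).differentiableAt
    have h := this.hasDerivAt
    rwa [hu3def, iteratedDeriv_succ, ← hu2def]
  have hd3 : ∀ t : ℝ, HasDerivAt u3 (u4 t) t := by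
    intro t
    have : DifferentiableAt ℝ u3 t := (h1.differentiable one_ne_zero).differentiableAt
    have h := this.hasDerivAt
    rwa [hu4def, iteratedDeriv_succ, ← hu3def]
  -- h := 1/u2 and its derivative on Ici 0
  set h := fun t : ℝ => 1 / u2 t with hhdef
  have hdiffh : ∀ t : ℝ, u2 t ≠ 0 → HasDerivAt h (-(u3 t) / (u2 t)^2) t := by
    intro t hne
    have := (hasDerivAt_const t (1:ℝ)).fun_div (hd2 t) hne
    rw [show -(u3 t) / (u2 t)^2 = (0 * u2 t - 1 * u3 t) / u2 t ^ 2 by ring]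
    exact this
  have hG : AntitoneOn (deriv h) (Ici 0) := by
    apply hconc.antitoneOn_deriv
    intro t ht
    exact ((differentiableAt_const (1:ℝ)).div ((hd2 t).differentiableAt)
      (ne_of_gt (ha'' t ht)))
  -- near y, u2 > 0
  have hcont : Continuous u2 := h2.continuous
  have hnbhd : ∀ᶠ t in nhds y, 0 < u2 t :=
    hcont.continuousAt.eventually_mem (isOpen_Ioi.mem_nhds (ha'' y hy))
  -- deriv h equals the formula eventually
  have heq : deriv h =ᶠ[nhds y] fun t => -(u3 t) / (u2 t)^2 := by
    filter_upwards [hnbhd] with t ht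
    exact (hdiffh t (ne_of_gt ht)).deriv
  -- derivative of the formula at y
  have hu2pos := ha'' y hy
  have hψ : HasDerivAt (fun t => -(u3 t) / (u2 t)^2)
      ((-(u4 y) * (u2 y)^2 - (-(u3 y)) * (2 * u2 y ^ 1 * u3 y)) / ((u2 y)^2)^2) y := by
    exact ((hd3 y).neg).div ((hd2 y).pow 2) (by positivity)
  -- deriv (deriv h) y ≤ 0
  have hderiv2 : HasDerivAt (deriv h)
      ((-(u4 y) * (u2 y)^2 - (-(u3 y)) * (2 * u2 y ^ 1 * u3 y)) / ((u2 y)^2)^2) y := by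
    apply HasDerivAt.congr_of_eventuallyEq hψ heq
  have hnonpos := antitoneOn_hasDerivAt_nonpos hG hy hderiv2
  have hX : -(u4 y) * (u2 y)^2 - (-(u3 y)) * (2 * u2 y ^ 1 * u3 y) ≤ 0 := by
    have hp : (0:ℝ) < ((u2 y)^2)^2 := by positivity
    by_contra hcon
    push_neg at hcon
    have := div_pos hcon hp
    linarith
  nlinarith [hu2pos, sq_nonneg (u3 y)]

variable {d : ℕ}


lemma pd_contDiff {f : EuclideanSpace ℝ (Fin d) → ℝ} (hf : ContDiff ℝ (⊤ : ℕ∞) f) (i : Fin d) :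
    ContDiff ℝ (⊤ : ℕ∞) (pd i f) := by
  have h1 : ContDiff ℝ (⊤ : ℕ∞) (fderiv ℝ f) := hf.fderiv_right (le_refl _)
  exact ((ContinuousLinearMap.apply ℝ ℝ (EuclideanSpace.single i 1)).contDiff).comp h1

lemma pd_add {u v : EuclideanSpace ℝ (Fin d) → ℝ} {x : EuclideanSpace ℝ (Fin d)} (i : Fin d)
    (hu : DifferentiableAt ℝ u x) (hv : DifferentiableAt ℝ v x) :
    pd i (fun y => u y + v y) x = pd i u x + pd i v x := by
  simp [pd, fderiv_fun_add hu hv]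

lemma pd_mul {u v : EuclideanSpace ℝ (Fin d) → ℝ} {x : EuclideanSpace ℝ (Fin d)} (i : Fin d)
    (hu : DifferentiableAt ℝ u x) (hv : DifferentiableAt ℝ v x) :
    pd i (fun y => u y * v y) x = pd i u x * v x + u x * pd i v x := by
  simp [pd, fderiv_fun_mul hu hv]; ring

lemma pd_const_mul {u : EuclideanSpace ℝ (Fin d) → ℝ} {x : EuclideanSpace ℝ (Fin d)} (i : Fin d)
    (c : ℝ) (hu : DifferentiableAt ℝ u x) :
    pd i (fun y => c * u y) x = c * pd i u x := by
  simp [pd, fderiv_const_mul hu]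

lemma pd_sum {ι : Type*} (s : Finset ι) {u : ι → EuclideanSpace ℝ (Fin d) → ℝ}
    {x : EuclideanSpace ℝ (Fin d)} (i : Fin d)
    (hu : ∀ j ∈ s, DifferentiableAt ℝ (u j) x) :
    pd i (fun y => ∑ j ∈ s, u j y) x = ∑ j ∈ s, pd i (u j) x := by
  simp [pd, fderiv_fun_sum hu]

lemma pd_comp {φ : ℝ → ℝ} {f : EuclideanSpace ℝ (Fin d) → ℝ} {x : EuclideanSpace ℝ (Fin d)}
    (i : Fin d) (hφ : DifferentiableAt ℝ φ (f x)) (hf : DifferentiableAt ℝ f x) :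
    pd i (fun y => φ (f y)) x = deriv φ (f x) * pd i f x := by
  have h := fderiv_comp (𝕜 := ℝ) x hφ hf
  simp only [pd, Function.comp_def] at h ⊢
  rw [h]
  simp only [ContinuousLinearMap.coe_comp', Function.comp_apply]
  have : fderiv ℝ φ (f x) (fderiv ℝ f x (EuclideanSpace.single i 1))
      = (fderiv ℝ f x (EuclideanSpace.single i 1)) • (fderiv ℝ φ (f x) 1) := by
    rw [← ContinuousLinearMap.map_smul, smul_eq_mul, mul_one]
  rw [this, fderiv_apply_one_eq_deriv, smul_eq_mul]; ring

lemma pd_symm {f : EuclideanSpace ℝ (Fin d) → ℝ} (hf : ContDiff ℝ (⊤ : ℕ∞) f) (i j : Fin d)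
    (x : EuclideanSpace ℝ (Fin d)) :
    pd i (pd j f) x = pd j (pd i f) x := by
  have hsymm : IsSymmSndFDerivAt ℝ f x :=
    (hf.contDiffAt).isSymmSndFDerivAt
      (by rw [minSmoothness_of_isRCLikeNormedField]; exact WithTop.coe_le_coe.mpr (le_top : (2 : ℕ∞) ≤ ⊤))
  have hdf : DifferentiableAt ℝ (fderiv ℝ f) x :=
    ((hf.fderiv_right (m := (⊤ : ℕ∞)) (le_refl _)).differentiable (by simp)).differentiableAt
  have key : ∀ (k : Fin d) (w : EuclideanSpace ℝ (Fin d)),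
      pd k (fun y => fderiv ℝ f y w) x
        = fderiv ℝ (fderiv ℝ f) x (EuclideanSpace.single k 1) w := by
    intro k w
    simp only [pd]
    rw [fderiv_clm_apply hdf (differentiableAt_const w)]
    simp
  have e1 : pd i (pd j f) x = pd i (fun y => fderiv ℝ f y (EuclideanSpace.single j 1)) x := rfl
  have e2 : pd j (pd i f) x = pd j (fun y => fderiv ℝ f y (EuclideanSpace.single i 1)) x := rfl
  rw [e1, e2, key, key]
  exact hsymm _ _


end Helpers

/-- For `L f = b·∇f + div(D∇f)` with `D = QᵀQ` constant PSD, `M = PᵀP`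
constant symmetric positive definite, and `a` admissible, the functional
`Φ_M(f) = a''(f)(∇f)ᵀM∇f` satisfies `Γ_{Φ_M}(f) ≥ −a''(f)(∇f)ᵀ M J_b ∇f`,
where `Γ_{Φ_M} f = (L(Φ_M f) − (a'''(f)·Lf·(∇f)ᵀM∇f + 2a''(f)(∇f)ᵀM∇(Lf)))/2`. -/
theorem stmt9 {d : ℕ}
    (b : EuclideanSpace ℝ (Fin d) → EuclideanSpace ℝ (Fin d)) (hb : ContDiff ℝ (⊤ : ℕ∞) b)
    (D Q M Pm : Matrix (Fin d) (Fin d) ℝ)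
    (hD : D = Q.transpose * Q) (hM : M = Pm.transpose * Pm) (hMpos : M.PosDef)
    (a : ℝ → ℝ) (ha : ContDiff ℝ 4 a)
    (ha'' : ∀ x : ℝ, 0 ≤ x → 0 < iteratedDeriv 2 a x)
    (hconc : ConcaveOn ℝ (Set.Ici (0:ℝ)) fun x => 1 / iteratedDeriv 2 a x)
    (f : EuclideanSpace ℝ (Fin d) → ℝ) (hf : ContDiff ℝ (⊤ : ℕ∞) f) (hfpos : ∀ x, 0 ≤ f x) :
    ∀ x : EuclideanSpace ℝ (Fin d),
      -(iteratedDeriv 2 a (f x))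
          * ∑ i, ∑ k, pd i f x * (∑ j, M i j * pd j (fun y => b y k) x) * pd k f x
        ≤ (diffGen b D
              (fun y => iteratedDeriv 2 a (f y) * ∑ i, ∑ j, M i j * pd i f y * pd j f y) x
            - (iteratedDeriv 3 a (f x) * diffGen b D f x
                  * ∑ i, ∑ j, M i j * pd i f x * pd j f x
              + 2 * iteratedDeriv 2 a (f x)
                  * ∑ i, ∑ j, M i j * pd i f x * pd j (diffGen b D f) x)) / 2 := by
  intro x
  -- basic smoothness
  have hf' : ∀ i : Fin d, ContDiff ℝ (⊤ : ℕ∞) (pd i f) := fun i => pd_contDiff hf i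
  have hf'' : ∀ i j : Fin d, ContDiff ℝ (⊤ : ℕ∞) (pd i (pd j f)) := fun i j => pd_contDiff (hf' j) i
  have hbk : ∀ k : Fin d, ContDiff ℝ (⊤ : ℕ∞) (fun y => b y k) := fun k =>
    (EuclideanSpace.proj (𝕜 := ℝ) k).contDiff.comp hb
  have Df : ∀ y, DifferentiableAt ℝ f y := fun y => (hf.differentiable (by simp)).differentiableAt
  have Dpd : ∀ (i : Fin d) y, DifferentiableAt ℝ (pd i f) y := fun i y =>
    ((hf' i).differentiable (by simp)).differentiableAt
  have Dpd2 : ∀ (i j : Fin d) y, DifferentiableAt ℝ (pd i (pd j f)) y := fun i j y =>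
    ((hf'' i j).differentiable (by simp)).differentiableAt
  have Dbk : ∀ (k : Fin d) y, DifferentiableAt ℝ (fun z => b z k) y := fun k y =>
    ((hbk k).differentiable (by simp)).differentiableAt
  -- derivative functions of a
  have hu2C : ContDiff ℝ 2 (iteratedDeriv 2 a) := by
    have h3 : ContDiff ℝ 3 (deriv a) :=
      ((contDiff_succ_iff_deriv (n := 3)).mp (by exact_mod_cast ha)).2.2
    have h2 : ContDiff ℝ 2 (deriv (deriv a)) :=
      ((contDiff_succ_iff_deriv (n := 2)).mp (by exact_mod_cast h3)).2.2
    rw [iteratedDeriv_succ, iteratedDeriv_one]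
    exact h2
  have hu3C : ContDiff ℝ 1 (iteratedDeriv 3 a) := by
    have h1 : ContDiff ℝ 1 (deriv (iteratedDeriv 2 a)) :=
      ((contDiff_succ_iff_deriv (n := 1)).mp (by exact_mod_cast hu2C)).2.2
    have h := iteratedDeriv_succ (n := 2) (f := a) (𝕜 := ℝ)
    norm_num at h
    rw [h]
    exact h1
  have Du2 : ∀ s : ℝ, DifferentiableAt ℝ (iteratedDeriv 2 a) s := fun s =>
    (hu2C.differentiable (by norm_num)).differentiableAt
  have Du3 : ∀ s : ℝ, DifferentiableAt ℝ (iteratedDeriv 3 a) s := fun s =>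
    (hu3C.differentiable one_ne_zero).differentiableAt
  have hd2 : deriv (iteratedDeriv 2 a) = iteratedDeriv 3 a := by
    have h := iteratedDeriv_succ (n := 2) (f := a) (𝕜 := ℝ)
    norm_num at h
    exact h.symm
  have hd3 : deriv (iteratedDeriv 3 a) = iteratedDeriv 4 a := by
    have h := iteratedDeriv_succ (n := 3) (f := a) (𝕜 := ℝ)
    norm_num at h
    exact h.symm
  have Du2f : ∀ y, DifferentiableAt ℝ (fun z => iteratedDeriv 2 a (f z)) y := fun y =>
    (Du2 (f y)).comp y (Df y)
  have Du3f : ∀ y, DifferentiableAt ℝ (fun z => iteratedDeriv 3 a (f z)) y := fun y =>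
    (Du3 (f y)).comp y (Df y)
  have pdu2 : ∀ (i : Fin d) y, pd i (fun z => iteratedDeriv 2 a (f z)) y
      = iteratedDeriv 3 a (f y) * pd i f y := fun i y => by
    rw [pd_comp i (Du2 (f y)) (Df y), hd2]
  have pdu3 : ∀ (i : Fin d) y, pd i (fun z => iteratedDeriv 3 a (f z)) y
      = iteratedDeriv 4 a (f y) * pd i f y := fun i y => by
    rw [pd_comp i (Du3 (f y)) (Df y), hd3]
  -- the quadratic form function
  have Dg : ∀ y, DifferentiableAt ℝ (fun z => ∑ i, ∑ j, M i j * pd i f z * pd j f z) y :=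
    fun y => DifferentiableAt.fun_sum fun i _ => DifferentiableAt.fun_sum fun j _ =>
      ((differentiableAt_const _).mul (Dpd i y)).mul (Dpd j y)
  have DGG : ∀ (k : Fin d) y, DifferentiableAt ℝ
      (fun z => ∑ i, ∑ j, M i j * (pd k (pd i f) z * pd j f z + pd i f z * pd k (pd j f) z)) y :=
    fun k y => DifferentiableAt.fun_sum fun i _ => DifferentiableAt.fun_sum fun j _ =>
      (differentiableAt_const _).mul
        (((Dpd2 k i y).mul (Dpd j y)).add ((Dpd i y).mul (Dpd2 k j y)))
  -- c1 : derivative of the quadratic form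
  have c1 : ∀ (k : Fin d) y, pd k (fun z => ∑ i, ∑ j, M i j * pd i f z * pd j f z) y
      = ∑ i, ∑ j, M i j * (pd k (pd i f) y * pd j f y + pd i f y * pd k (pd j f) y) := by
    intro k y
    calc pd k (fun z => ∑ i, ∑ j, M i j * pd i f z * pd j f z) y
        = ∑ i, pd k (fun z => ∑ j, M i j * pd i f z * pd j f z) y :=
          pd_sum Finset.univ (u := fun i => fun z => ∑ j, M i j * pd i f z * pd j f z) k
            (fun i _ => DifferentiableAt.fun_sum fun j _ =>
              ((differentiableAt_const _).mul (Dpd i y)).mul (Dpd j y))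
      _ = ∑ i, ∑ j, pd k (fun z => M i j * pd i f z * pd j f z) y :=
          Finset.sum_congr rfl fun i _ =>
            pd_sum Finset.univ (u := fun j => fun z => M i j * pd i f z * pd j f z) k
              (fun j _ => ((differentiableAt_const _).mul (Dpd i y)).mul (Dpd j y))
      _ = ∑ i, ∑ j, M i j * (pd k (pd i f) y * pd j f y + pd i f y * pd k (pd j f) y) := by
          refine Finset.sum_congr rfl fun i _ => Finset.sum_congr rfl fun j _ => ?_
          have h := pd_mul (u := fun z => M i j * pd i f z) (v := pd j f) k
            ((differentiableAt_const _).mul (Dpd i y)) (Dpd j y)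
          rw [pd_const_mul k (M i j) (Dpd i y)] at h
          calc pd k (fun z => M i j * pd i f z * pd j f z) y
              = M i j * pd k (pd i f) y * pd j f y + M i j * pd i f y * pd k (pd j f) y := h
            _ = M i j * (pd k (pd i f) y * pd j f y + pd i f y * pd k (pd j f) y) := by ring
  -- c2 : first derivative of Φ
  have c2 : ∀ (k : Fin d) y, pd k (fun z => iteratedDeriv 2 a (f z)
        * ∑ i, ∑ j, M i j * pd i f z * pd j f z) y
      = iteratedDeriv 3 a (f y) * pd k f y * (∑ i, ∑ j, M i j * pd i f y * pd j f y)
        + iteratedDeriv 2 a (f y)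
          * ∑ i, ∑ j, M i j * (pd k (pd i f) y * pd j f y + pd i f y * pd k (pd j f) y) := by
    intro k y
    have h := pd_mul (u := fun z => iteratedDeriv 2 a (f z))
      (v := fun z => ∑ i, ∑ j, M i j * pd i f z * pd j f z) k (Du2f y) (Dg y)
    rw [pdu2 k y, c1 k y] at h
    exact h
  -- c5 : derivative of the GG form
  have c5 : ∀ (l k : Fin d), pd l (fun z => ∑ i, ∑ j, M i j
        * (pd k (pd i f) z * pd j f z + pd i f z * pd k (pd j f) z)) x
      = ∑ i, ∑ j, M i j * (pd l (pd k (pd i f)) x * pd j f x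
          + pd k (pd i f) x * pd l (pd j f) x
          + pd l (pd i f) x * pd k (pd j f) x
          + pd i f x * pd l (pd k (pd j f)) x) := by
    intro l k
    calc pd l (fun z => ∑ i, ∑ j, M i j
          * (pd k (pd i f) z * pd j f z + pd i f z * pd k (pd j f) z)) x
        = ∑ i, pd l (fun z => ∑ j, M i j
            * (pd k (pd i f) z * pd j f z + pd i f z * pd k (pd j f) z)) x :=
          pd_sum Finset.univ (u := fun i => fun z => ∑ j, M i j
            * (pd k (pd i f) z * pd j f z + pd i f z * pd k (pd j f) z)) l
            (fun i _ => DifferentiableAt.fun_sum fun j _ => (differentiableAt_const _).mul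
              (((Dpd2 k i x).mul (Dpd j x)).add ((Dpd i x).mul (Dpd2 k j x))))
      _ = ∑ i, ∑ j, pd l (fun z => M i j
            * (pd k (pd i f) z * pd j f z + pd i f z * pd k (pd j f) z)) x :=
          Finset.sum_congr rfl fun i _ =>
            pd_sum Finset.univ (u := fun j => fun z => M i j
              * (pd k (pd i f) z * pd j f z + pd i f z * pd k (pd j f) z)) l
              (fun j _ => (differentiableAt_const _).mul
                (((Dpd2 k i x).mul (Dpd j x)).add ((Dpd i x).mul (Dpd2 k j x))))
      _ = ∑ i, ∑ j, M i j * (pd l (pd k (pd i f)) x * pd j f x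
            + pd k (pd i f) x * pd l (pd j f) x
            + pd l (pd i f) x * pd k (pd j f) x
            + pd i f x * pd l (pd k (pd j f)) x) := by
          refine Finset.sum_congr rfl fun i _ => Finset.sum_congr rfl fun j _ => ?_
          have hadd := pd_add (u := fun z => pd k (pd i f) z * pd j f z)
            (v := fun z => pd i f z * pd k (pd j f) z) l
            ((Dpd2 k i x).mul (Dpd j x)) ((Dpd i x).mul (Dpd2 k j x))
          have hm1 := pd_mul (u := pd k (pd i f)) (v := pd j f) l (Dpd2 k i x) (Dpd j x)
          have hm2 := pd_mul (u := pd i f) (v := pd k (pd j f)) l (Dpd i x) (Dpd2 k j x)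
          rw [hm1, hm2] at hadd
          have hc := pd_const_mul (u := fun z =>
              pd k (pd i f) z * pd j f z + pd i f z * pd k (pd j f) z) l (M i j)
            (((Dpd2 k i x).mul (Dpd j x)).add ((Dpd i x).mul (Dpd2 k j x)))
          rw [hadd] at hc
          calc pd l (fun z => M i j
                * (pd k (pd i f) z * pd j f z + pd i f z * pd k (pd j f) z)) x
              = M i j * (pd l (pd k (pd i f)) x * pd j f x + pd k (pd i f) x * pd l (pd j f) x
                  + (pd l (pd i f) x * pd k (pd j f) x + pd i f x * pd l (pd k (pd j f)) x)) := hc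
            _ = _ := by ring
  -- c3 : second derivatives of Φ
  have c3 : ∀ (l k : Fin d), pd l (pd k (fun z => iteratedDeriv 2 a (f z)
        * ∑ i, ∑ j, M i j * pd i f z * pd j f z)) x
      = iteratedDeriv 4 a (f x) * pd l f x * pd k f x
          * (∑ i, ∑ j, M i j * pd i f x * pd j f x)
        + iteratedDeriv 3 a (f x) * (pd l (pd k f) x
              * (∑ i, ∑ j, M i j * pd i f x * pd j f x)
            + pd k f x * (∑ i, ∑ j, M i j
                * (pd l (pd i f) x * pd j f x + pd i f x * pd l (pd j f) x))
            + pd l f x * (∑ i, ∑ j, M i j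
                * (pd k (pd i f) x * pd j f x + pd i f x * pd k (pd j f) x)))
        + iteratedDeriv 2 a (f x) * ∑ i, ∑ j, M i j
            * (pd l (pd k (pd i f)) x * pd j f x
              + pd k (pd i f) x * pd l (pd j f) x
              + pd l (pd i f) x * pd k (pd j f) x
              + pd i f x * pd l (pd k (pd j f)) x) := by
    intro l k
    have hfun : pd k (fun z => iteratedDeriv 2 a (f z)
          * ∑ i, ∑ j, M i j * pd i f z * pd j f z)
        = fun y => iteratedDeriv 3 a (f y) * pd k f y
              * (∑ i, ∑ j, M i j * pd i f y * pd j f y)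
            + iteratedDeriv 2 a (f y) * ∑ i, ∑ j, M i j
              * (pd k (pd i f) y * pd j f y + pd i f y * pd k (pd j f) y) :=
      funext fun y => c2 k y
    rw [hfun]
    have DA : DifferentiableAt ℝ (fun y => iteratedDeriv 3 a (f y) * pd k f y) x :=
      (Du3f x).mul (Dpd k x)
    have DT1 : DifferentiableAt ℝ (fun y => iteratedDeriv 3 a (f y) * pd k f y
        * (∑ i, ∑ j, M i j * pd i f y * pd j f y)) x := DA.mul (Dg x)
    have DT2 : DifferentiableAt ℝ (fun y => iteratedDeriv 2 a (f y) * ∑ i, ∑ j, M i j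
        * (pd k (pd i f) y * pd j f y + pd i f y * pd k (pd j f) y)) x :=
      (Du2f x).mul (DGG k x)
    have hT1 : pd l (fun y => iteratedDeriv 3 a (f y) * pd k f y
          * (∑ i, ∑ j, M i j * pd i f y * pd j f y)) x
        = (iteratedDeriv 4 a (f x) * pd l f x * pd k f x
            + iteratedDeriv 3 a (f x) * pd l (pd k f) x)
            * (∑ i, ∑ j, M i j * pd i f x * pd j f x)
          + iteratedDeriv 3 a (f x) * pd k f x * (∑ i, ∑ j, M i j
              * (pd l (pd i f) x * pd j f x + pd i f x * pd l (pd j f) x)) := by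
      have h := pd_mul (u := fun y => iteratedDeriv 3 a (f y) * pd k f y)
        (v := fun y => ∑ i, ∑ j, M i j * pd i f y * pd j f y) l DA (Dg x)
      have h2 := pd_mul (u := fun z => iteratedDeriv 3 a (f z)) (v := pd k f) l
        (Du3f x) (Dpd k x)
      rw [pdu3 l x] at h2
      rw [h2, c1 l x] at h
      exact h
    have hT2 : pd l (fun y => iteratedDeriv 2 a (f y) * ∑ i, ∑ j, M i j
          * (pd k (pd i f) y * pd j f y + pd i f y * pd k (pd j f) y)) x
        = iteratedDeriv 3 a (f x) * pd l f x * (∑ i, ∑ j, M i j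
            * (pd k (pd i f) x * pd j f x + pd i f x * pd k (pd j f) x))
          + iteratedDeriv 2 a (f x) * ∑ i, ∑ j, M i j
            * (pd l (pd k (pd i f)) x * pd j f x
              + pd k (pd i f) x * pd l (pd j f) x
              + pd l (pd i f) x * pd k (pd j f) x
              + pd i f x * pd l (pd k (pd j f)) x) := by
      have h := pd_mul (u := fun z => iteratedDeriv 2 a (f z))
        (v := fun z => ∑ i, ∑ j, M i j
          * (pd k (pd i f) z * pd j f z + pd i f z * pd k (pd j f) z)) l
        (Du2f x) (DGG k x)
      rw [pdu2 l x, c5 l k] at h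
      exact h
    calc pd l (fun y => iteratedDeriv 3 a (f y) * pd k f y
            * (∑ i, ∑ j, M i j * pd i f y * pd j f y)
          + iteratedDeriv 2 a (f y) * ∑ i, ∑ j, M i j
            * (pd k (pd i f) y * pd j f y + pd i f y * pd k (pd j f) y)) x
        = pd l (fun y => iteratedDeriv 3 a (f y) * pd k f y
              * (∑ i, ∑ j, M i j * pd i f y * pd j f y)) x
          + pd l (fun y => iteratedDeriv 2 a (f y) * ∑ i, ∑ j, M i j
              * (pd k (pd i f) y * pd j f y + pd i f y * pd k (pd j f) y)) x :=
          pd_add l DT1 DT2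
      _ = _ := by rw [hT1, hT2]; ring
  -- c4 : derivative of L f
  have c4 : ∀ j : Fin d, pd j (diffGen b D f) x
      = (∑ k, (pd j (fun y => b y k) x * pd k f x + b x k * pd j (pd k f) x))
        + ∑ k, ∑ l, D k l * pd j (pd k (pd l f)) x := by
    intro j
    have e : diffGen b D f
        = fun y => (∑ k, b y k * pd k f y) + ∑ p, ∑ q, D p q * pd p (pd q f) y := rfl
    rw [e]
    have hu : DifferentiableAt ℝ (fun y => ∑ k, b y k * pd k f y) x :=
      DifferentiableAt.fun_sum fun k _ => (Dbk k x).mul (Dpd k x)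
    have hv : DifferentiableAt ℝ (fun y => ∑ p, ∑ q, D p q * pd p (pd q f) y) x :=
      DifferentiableAt.fun_sum fun p _ => DifferentiableAt.fun_sum fun q _ =>
        (differentiableAt_const _).mul (Dpd2 p q x)
    calc pd j (fun y => (∑ k, b y k * pd k f y) + ∑ p, ∑ q, D p q * pd p (pd q f) y) x
        = pd j (fun y => ∑ k, b y k * pd k f y) x
          + pd j (fun y => ∑ p, ∑ q, D p q * pd p (pd q f) y) x := pd_add j hu hv
      _ = (∑ k, pd j (fun y => b y k * pd k f y) x)
          + ∑ p, ∑ q, pd j (fun y => D p q * pd p (pd q f) y) x := by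
          congr 1
          · exact pd_sum Finset.univ (u := fun k => fun y => b y k * pd k f y) j
              (fun k _ => (Dbk k x).mul (Dpd k x))
          · calc pd j (fun y => ∑ p, ∑ q, D p q * pd p (pd q f) y) x
                = ∑ p, pd j (fun y => ∑ q, D p q * pd p (pd q f) y) x :=
                  pd_sum Finset.univ (u := fun p => fun y => ∑ q, D p q * pd p (pd q f) y) j
                    (fun p _ => DifferentiableAt.fun_sum fun q _ =>
                      (differentiableAt_const _).mul (Dpd2 p q x))
              _ = ∑ p, ∑ q, pd j (fun y => D p q * pd p (pd q f) y) x :=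
                  Finset.sum_congr rfl fun p _ =>
                    pd_sum Finset.univ (u := fun q => fun y => D p q * pd p (pd q f) y) j
                      (fun q _ => (differentiableAt_const _).mul (Dpd2 p q x))
      _ = _ := by
          congr 1
          · refine Finset.sum_congr rfl fun k _ => ?_
            exact pd_mul (u := fun y => b y k) (v := pd k f) j (Dbk k x) (Dpd k x)
          · refine Finset.sum_congr rfl fun p _ => Finset.sum_congr rfl fun q _ => ?_
            exact pd_const_mul j (D p q) (Dpd2 p q x)
  -- symmetry facts
  have Hsym' : ∀ i j : Fin d, pd i (pd j f) x = pd j (pd i f) x := fun i j => pd_symm hf i j x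
  have T12 : ∀ p q r : Fin d, pd p (pd q (pd r f)) x = pd q (pd p (pd r f)) x :=
    fun p q r => pd_symm (hf' r) p q x
  have T23 : ∀ p q r : Fin d, pd p (pd q (pd r f)) x = pd p (pd r (pd q f)) x := by
    intro p q r
    rw [show pd q (pd r f) = pd r (pd q f) from funext fun y => pd_symm hf q r y]
  -- assembling
  have hPhi : diffGen b D
        (fun y => iteratedDeriv 2 a (f y) * ∑ i, ∑ j, M i j * pd i f y * pd j f y) x
      = (∑ k, b x k * (iteratedDeriv 3 a (f x) * pd k f x
            * (∑ i, ∑ j, M i j * pd i f x * pd j f x)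
          + iteratedDeriv 2 a (f x) * ∑ i, ∑ j, M i j
              * (pd k (pd i f) x * pd j f x + pd i f x * pd k (pd j f) x)))
        + ∑ l, ∑ k, D l k *
            (iteratedDeriv 4 a (f x) * pd l f x * pd k f x
                * (∑ i, ∑ j, M i j * pd i f x * pd j f x)
              + iteratedDeriv 3 a (f x) * (pd l (pd k f) x
                    * (∑ i, ∑ j, M i j * pd i f x * pd j f x)
                  + pd k f x * (∑ i, ∑ j, M i j
                      * (pd l (pd i f) x * pd j f x + pd i f x * pd l (pd j f) x))
                  + pd l f x * (∑ i, ∑ j, M i j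
                      * (pd k (pd i f) x * pd j f x + pd i f x * pd k (pd j f) x)))
              + iteratedDeriv 2 a (f x) * ∑ i, ∑ j, M i j
                  * (pd l (pd k (pd i f)) x * pd j f x
                    + pd k (pd i f) x * pd l (pd j f) x
                    + pd l (pd i f) x * pd k (pd j f) x
                    + pd i f x * pd l (pd k (pd j f)) x)) := by
    have e : diffGen b D
          (fun y => iteratedDeriv 2 a (f y) * ∑ i, ∑ j, M i j * pd i f y * pd j f y) x
        = (∑ i, b x i * pd i
            (fun y => iteratedDeriv 2 a (f y) * ∑ i, ∑ j, M i j * pd i f y * pd j f y) x)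
          + ∑ i, ∑ j, D i j * pd i (pd j
            (fun y => iteratedDeriv 2 a (f y) * ∑ i, ∑ j, M i j * pd i f y * pd j f y)) x := rfl
    rw [e]
    congr 1
    · exact Finset.sum_congr rfl fun k _ => by rw [c2 k x]
    · exact Finset.sum_congr rfl fun l _ => Finset.sum_congr rfl fun k _ => by rw [c3 l k]
  have hLfMS : (∑ i, ∑ j, M i j * pd i f x * pd j (diffGen b D f) x)
      = ∑ i, ∑ j, M i j * pd i f x
          * ((∑ k, (pd j (fun y => b y k) x * pd k f x + b x k * pd j (pd k f) x))
            + ∑ k, ∑ l, D k l * pd j (pd k (pd l f)) x) :=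
    Finset.sum_congr rfl fun i _ => Finset.sum_congr rfl fun j _ => by rw [c4 j]
  have hLf : diffGen b D f x
      = (∑ k, b x k * pd k f x) + ∑ i, ∑ j, D i j * pd i (pd j f) x := rfl
  rw [hPhi, hLfMS, hLf]
  exact key_algebra M D Pm Q hM hD (fun i => pd i f x) (fun i j => pd i (pd j f) x)
    (fun p q r => pd p (pd q (pd r f)) x) (fun j k => pd j (fun y => b y k) x)
    (fun k => b x k) Hsym' T12 T23 (iteratedDeriv 2 a (f x)) (iteratedDeriv 3 a (f x))
    (iteratedDeriv 4 a (f x)) (ha'' _ (hfpos x))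
    (concave_second_ineq a ha ha'' hconc (hfpos x))
end

section
/- Let B be a d×d real matrix all of whose eigenvalues have real part ≥ ρ, and suppose some eigenvalue λ with Re(λ) = ρ has a Jordan block of size N. Let μ be a probability measure on ℝ^d with finite nonzero second moment not concentrated on any hyperplane. Then there exist c > 0 and a vector u such that ∫|xᵀe^{−tBᵀ}u|² dμ(x) ≥ (1/c)(1 + t^{2(N−1)})e^{−2ρt} for all t ≥ 0. -/
/-!
A Jordan chain of length `N` for `λ` exists for `Bᵀ` as well as for `B`, since the kernels of
`(B - λ)^k` and `(Bᵀ - λ)^k` have the same dimension: there is `u` with `(Bᵀ - λ)^N u = 0` and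
`(Bᵀ - λ)^(N-1) u ≠ 0`. For it, `e^{-tBᵀ} u = e^{-λt} p(t)` with `p` a vector polynomial of degree
`N - 1`, which never vanishes because `e^{-tBᵀ}` is invertible. The leading term controls `‖p(t)‖`
for large `t` and compactness does for small `t`, so `‖p(t)‖² ≥ c (1 + t^{2(N-1)})`. Finally
`v ↦ ∫ |xᵀv|² dμ` is continuous, homogeneous of degree two and positive since `μ` does not live on
a hyperplane, so it is bounded below by `m ‖v‖²` on the compact unit sphere and hence everywhere.
-/

open NormedSpace MeasureTheory

/-- The complexification of a real matrix. -/
noncomputable def cplxMat {d : ℕ} (B : Matrix (Fin d) (Fin d) ℝ) :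
    Matrix (Fin d) (Fin d) ℂ :=
  B.map (algebraMap ℝ ℂ)

/-- The complexification of a real matrix as an endomorphism of `ℂ^d`. -/
noncomputable def cplxEnd {d : ℕ} (B : Matrix (Fin d) (Fin d) ℝ) :
    Module.End ℂ (Fin d → ℂ) :=
  Matrix.toLin' (cplxMat B)

open scoped Matrix Nat
open Filter Finset Asymptotics

section JordanChain

variable {K : Type*} [Field K] {n : Type*} [Fintype n]

theorem Matrix.finrank_ker_mulVecLin_transpose (P : Matrix n n K) :
    Module.finrank K (LinearMap.ker Pᵀ.mulVecLin) =
      Module.finrank K (LinearMap.ker P.mulVecLin) := by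
  have hP := LinearMap.finrank_range_add_finrank_ker P.mulVecLin
  have hPt := LinearMap.finrank_range_add_finrank_ker Pᵀ.mulVecLin
  have hrank : Pᵀ.rank = P.rank := Matrix.rank_transpose P
  rw [Matrix.rank, Matrix.rank] at hrank
  omega

variable [DecidableEq n]

theorem Matrix.genEigenspace_toLin'_eq_ker (A : Matrix n n K) (c : K) (k : ℕ) :
    Module.End.genEigenspace (Matrix.toLin' A) c k = LinearMap.ker ((A - c • 1) ^ k).mulVecLin := by
  rw [Module.End.genEigenspace_nat, ← Matrix.toLin'_apply', Matrix.toLin'_pow, map_sub, map_smul,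
    Matrix.toLin'_one, Module.End.one_eq_id]

theorem Matrix.ker_mulVecLin_pow_le_succ (P : Matrix n n K) (k : ℕ) :
    LinearMap.ker (P ^ k).mulVecLin ≤ LinearMap.ker (P ^ (k + 1)).mulVecLin := fun v hv => by
  simp_all [pow_succ']

theorem Matrix.exists_transpose_pow_mulVec_eq_zero_ne_zero {P : Matrix n n K} {k : ℕ}
    (h : LinearMap.ker (P ^ (k + 1)).mulVecLin ≠ LinearMap.ker (P ^ k).mulVecLin) :
    ∃ u, (Pᵀ ^ (k + 1)) *ᵥ u = 0 ∧ (Pᵀ ^ k) *ᵥ u ≠ 0 := by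
  by_contra! H
  have hker : LinearMap.ker (Pᵀ ^ (k + 1)).mulVecLin = LinearMap.ker (Pᵀ ^ k).mulVecLin :=
    le_antisymm (fun v hv => H v hv) (Pᵀ.ker_mulVecLin_pow_le_succ k)
  refine h (Submodule.eq_of_le_of_finrank_eq (P.ker_mulVecLin_pow_le_succ k) ?_).symm
  have := congrArg (fun S : Submodule K (n → K) => Module.finrank K S) hker.symm
  rwa [← Matrix.transpose_pow, ← Matrix.transpose_pow, Matrix.finrank_ker_mulVecLin_transpose,
    Matrix.finrank_ker_mulVecLin_transpose] at this

end JordanChain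

section MatrixExp

variable {𝕂 : Type*} [RCLike 𝕂] {m : Type*} [Fintype m] [DecidableEq m]

open scoped Matrix.Norms.Operator in
theorem Matrix.exp_mulVec_eq_sum_of_pow_mulVec_eq_zero (M : Matrix m m 𝕂) {u : m → 𝕂} {N : ℕ}
    (h : (M ^ N) *ᵥ u = 0) :
    exp M *ᵥ u = ∑ k ∈ range N, (k !⁻¹ : 𝕂) • ((M ^ k) *ᵥ u) := by
  have hsum : HasSum (fun k => (k !⁻¹ : 𝕂) • ((M ^ k) *ᵥ u)) (exp M *ᵥ u) := by
    convert (exp_series_hasSum_exp' (𝕂 := 𝕂) M).map (Matrix.mulVec.addMonoidHomLeft u)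
      (continuous_id.matrix_mulVec continuous_const) using 1
    · exact funext fun k => (Matrix.smul_mulVec _ _ _).symm
    · rfl
  refine hsum.unique (hasSum_sum_of_ne_finset_zero fun k hk => ?_)
  obtain ⟨j, rfl⟩ := Nat.exists_eq_add_of_le (not_lt.mp (mem_range.not.mp hk))
  rw [add_comm, pow_add, ← Matrix.mulVec_mulVec, h, Matrix.mulVec_zero, smul_zero]

theorem Matrix.exp_smul_one_add (c : 𝕂) (M : Matrix m m 𝕂) :
    exp (c • (1 : Matrix m m 𝕂) + M) = exp c • exp M := by
  have hcomm : Commute (c • (1 : Matrix m m 𝕂)) M := (Commute.one_left M).smul_left c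
  rw [Matrix.exp_add_of_commute _ _ hcomm, Matrix.smul_one_eq_diagonal, Matrix.exp_diagonal,
    Pi.exp_def, ← Matrix.smul_one_eq_diagonal, smul_mul_assoc, one_mul]

theorem Matrix.exp_mulVec_ne_zero (M : Matrix m m 𝕂) {u : m → 𝕂} (hu : u ≠ 0) :
    exp M *ᵥ u ≠ 0 := fun h =>
  hu <| Matrix.mulVec_injective_iff_isUnit.mpr (Matrix.isUnit_exp M) <|
    h.trans (Matrix.mulVec_zero _).symm

end MatrixExp

theorem Matrix.exp_neg_smul_mulVec_of_pow_sub_smul_mulVec_eq_zero {m : Type*} [Fintype m]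
    [DecidableEq m] (A : Matrix m m ℂ) (lam : ℂ) {u : m → ℂ} {N : ℕ}
    (hu : (A - lam • 1) ^ N *ᵥ u = 0) (t : ℝ) :
    exp (-(t • A)) *ᵥ u = Complex.exp (-(t * lam)) •
      ∑ k ∈ range N, t ^ k • (((-1) ^ k * (k ! : ℂ)⁻¹) • ((A - lam • 1) ^ k *ᵥ u)) := by
  have hsplit : -(t • A) = (-(t * lam)) • (1 : Matrix m m ℂ) + (-t : ℂ) • (A - lam • 1) := by
    rw [← Complex.coe_smul]
    module
  have hnil : ((-t : ℂ) • (A - lam • 1)) ^ N *ᵥ u = 0 := by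
    rw [smul_pow, Matrix.smul_mulVec, hu, smul_zero]
  rw [hsplit, Matrix.exp_smul_one_add, Matrix.smul_mulVec,
    Matrix.exp_mulVec_eq_sum_of_pow_mulVec_eq_zero _ hnil, ← Complex.exp_eq_exp_ℂ]
  refine congrArg _ (sum_congr rfl fun k _ => ?_)
  rw [smul_pow, Matrix.smul_mulVec, smul_smul, ← Complex.coe_smul, smul_smul]
  congr 1
  push_cast
  ring

theorem exists_pos_mul_le_of_eventually_le {f g : ℝ → ℝ} (hf : Continuous f) (hg : Continuous g)
    (hf_pos : ∀ t, 0 ≤ t → 0 < f t) (hg_pos : ∀ t, 0 ≤ t → 0 < g t) {c₀ : ℝ} (hc₀ : 0 < c₀)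
    (hev : ∀ᶠ t in atTop, c₀ * g t ≤ f t) :
    ∃ c > 0, ∀ t, 0 ≤ t → c * g t ≤ f t := by
  obtain ⟨T, hT⟩ := eventually_atTop.mp hev
  obtain ⟨t₀, ht₀, hmin⟩ := isCompact_Icc.exists_isMinOn (Set.nonempty_Icc.mpr (le_max_left 0 T))
    (hf.continuousOn.div hg.continuousOn fun t ht => (hg_pos t ht.1).ne')
  refine ⟨min c₀ (f t₀ / g t₀), lt_min hc₀ (div_pos (hf_pos t₀ ht₀.1) (hg_pos t₀ ht₀.1)),
    fun t ht => ?_⟩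
  have hgt := (hg_pos t ht).le
  rcases le_total t (max 0 T) with htT | htT
  · calc min c₀ (f t₀ / g t₀) * g t ≤ f t / g t * g t :=
          mul_le_mul_of_nonneg_right ((min_le_right _ _).trans (hmin ⟨ht, htT⟩)) hgt
      _ = f t := div_mul_cancel₀ _ (hg_pos t ht).ne'
  · exact (mul_le_mul_of_nonneg_right (min_le_left _ _) hgt).trans (hT t (le_of_max_le_right htT))

section PolynomialGrowth

variable {E : Type*} [NormedAddCommGroup E] [NormedSpace ℝ E]

theorem eventually_le_norm_sum_pow_smul (a : ℕ → E) {n : ℕ} (ha : a n ≠ 0) :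
    ∀ᶠ t in atTop, ‖a n‖ / 2 * t ^ n ≤ ‖∑ k ∈ range (n + 1), t ^ k • a k‖ := by
  have hlower : (fun t : ℝ => ∑ k ∈ range n, t ^ k • a k) =o[atTop] fun t => t ^ n :=
    IsLittleO.fun_sum fun k hk =>
      (isBigO_of_le' (c := ‖a k‖) atTop fun t => by rw [norm_smul, mul_comm]).trans_isLittleO
        (isLittleO_pow_pow_atTop_of_lt (mem_range.mp hk))
  filter_upwards [hlower.def (by positivity : 0 < ‖a n‖ / 2), eventually_ge_atTop 0] with t ht ht0
  have htop : ‖t ^ n • a n‖ = t ^ n * ‖a n‖ := by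
    rw [norm_smul, Real.norm_of_nonneg (pow_nonneg ht0 n)]
  rw [Real.norm_of_nonneg (pow_nonneg ht0 n)] at ht
  rw [sum_range_succ]
  have := norm_sub_norm_le (t ^ n • a n) (-(∑ k ∈ range n, t ^ k • a k))
  rw [norm_neg, sub_neg_eq_add, add_comm] at this
  linarith

theorem exists_pos_mul_one_add_pow_le_norm_sum_pow_smul_sq (a : ℕ → E) {n : ℕ} (ha : a n ≠ 0)
    (hne : ∀ t : ℝ, 0 ≤ t → ∑ k ∈ range (n + 1), t ^ k • a k ≠ 0) :
    ∃ c > 0, ∀ t : ℝ, 0 ≤ t → c * (1 + t ^ (2 * n)) ≤ ‖∑ k ∈ range (n + 1), t ^ k • a k‖ ^ 2 := by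
  have ha' : 0 < ‖a n‖ := norm_pos_iff.mpr ha
  refine exists_pos_mul_le_of_eventually_le (by fun_prop) (by fun_prop)
    (fun t ht => by have := norm_pos_iff.mpr (hne t ht); positivity) (fun t _ => by positivity)
    (by positivity : 0 < ‖a n‖ ^ 2 / 8) ?_
  filter_upwards [eventually_le_norm_sum_pow_smul a ha, eventually_ge_atTop 1] with t ht ht1
  have hpow : 1 ≤ (t ^ n) ^ 2 := one_le_pow₀ (one_le_pow₀ ht1)
  calc ‖a n‖ ^ 2 / 8 * (1 + t ^ (2 * n)) ≤ (‖a n‖ / 2 * t ^ n) ^ 2 := by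
        rw [mul_comm 2 n, pow_mul]; nlinarith
    _ ≤ _ := pow_le_pow_left₀ (by positivity) ht 2

end PolynomialGrowth

theorem exists_pos_mul_norm_sq_le_of_homogeneous {𝕜 V : Type*} [RCLike 𝕜] [NormedAddCommGroup V]
    [NormedSpace 𝕜 V] [FiniteDimensional 𝕜 V] {q : V → ℝ} (hq : Continuous q)
    (hq_smul : ∀ (c : 𝕜) v, q (c • v) = ‖c‖ ^ 2 * q v) (hq_pos : ∀ v, v ≠ 0 → 0 < q v) :
    ∃ m > 0, ∀ v, m * ‖v‖ ^ 2 ≤ q v := by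
  rcases subsingleton_or_nontrivial V with hV | hV
  · refine ⟨1, one_pos, fun v => ?_⟩
    simpa [Subsingleton.elim v 0] using (hq_smul 0 0).ge
  have : ProperSpace V := FiniteDimensional.proper_rclike 𝕜 V
  obtain ⟨v₀, hv₀⟩ := exists_ne (0 : V)
  obtain ⟨w, hw, hmin⟩ := (isCompact_sphere (0 : V) 1).exists_isMinOn
    ⟨_, mem_sphere_zero_iff_norm.mpr (norm_smul_inv_norm (𝕜 := 𝕜) hv₀)⟩ hq.continuousOn
  have hw0 : w ≠ 0 := ne_zero_of_mem_unit_sphere ⟨w, hw⟩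
  refine ⟨q w, hq_pos w hw0, fun v => ?_⟩
  rcases eq_or_ne v 0 with rfl | hv
  · simpa using (hq_smul 0 0).ge
  have hunit := hmin (mem_sphere_zero_iff_norm.mpr (norm_smul_inv_norm (𝕜 := 𝕜) hv))
  calc q w * ‖v‖ ^ 2 ≤ q ((‖v‖⁻¹ : 𝕜) • v) * ‖v‖ ^ 2 := by gcongr; exact hunit
    _ = q v := by
      rw [hq_smul, norm_inv, RCLike.norm_ofReal, abs_norm]
      field_simp [norm_ne_zero_iff.mpr hv]

section SecondMoment

variable {ι : Type*} [Fintype ι] {μ : Measure (ι → ℝ)}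

theorem norm_sum_ofReal_mul_le (x : ι → ℝ) (v : ι → ℂ) :
    ‖∑ i, (x i : ℂ) * v i‖ ≤ Fintype.card ι * (‖x‖ * ‖v‖) := by
  calc ‖∑ i, (x i : ℂ) * v i‖ ≤ ∑ i, ‖(x i : ℂ) * v i‖ := norm_sum_le _ _
    _ ≤ ∑ _i : ι, ‖x‖ * ‖v‖ := Finset.sum_le_sum fun i _ => by
        rw [norm_mul, Complex.norm_real]
        exact mul_le_mul (norm_le_pi_norm x i) (norm_le_pi_norm v i) (norm_nonneg _) (norm_nonneg _)
    _ = Fintype.card ι * (‖x‖ * ‖v‖) := by simp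

theorem norm_sum_ofReal_mul_sq_le (x : ι → ℝ) (v : ι → ℂ) :
    ‖∑ i, (x i : ℂ) * v i‖ ^ 2 ≤ (Fintype.card ι * ‖v‖) ^ 2 * ‖x‖ ^ 2 := by
  calc ‖∑ i, (x i : ℂ) * v i‖ ^ 2 ≤ (Fintype.card ι * (‖x‖ * ‖v‖)) ^ 2 := by
        gcongr; exact norm_sum_ofReal_mul_le x v
    _ = (Fintype.card ι * ‖v‖) ^ 2 * ‖x‖ ^ 2 := by ring

theorem integrable_norm_sum_ofReal_mul_sq (hmom : Integrable (fun x => ‖x‖ ^ 2) μ) (v : ι → ℂ) :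
    Integrable (fun x : ι → ℝ => ‖∑ i, (x i : ℂ) * v i‖ ^ 2) μ :=
  (hmom.const_mul _).mono' (Continuous.aestronglyMeasurable (by fun_prop)) (.of_forall fun x => by
    rw [Real.norm_of_nonneg (sq_nonneg _)]; exact norm_sum_ofReal_mul_sq_le x v)

theorem continuous_integral_norm_sum_ofReal_mul_sq (hmom : Integrable (fun x => ‖x‖ ^ 2) μ) :
    Continuous fun v : ι → ℂ => ∫ x, ‖∑ i, (x i : ℂ) * v i‖ ^ 2 ∂μ := by
  refine continuous_iff_continuousAt.mpr fun v₀ => continuousAt_of_dominated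
    (.of_forall fun v => (integrable_norm_sum_ofReal_mul_sq hmom v).aestronglyMeasurable) ?_
    (hmom.const_mul ((Fintype.card ι * (‖v₀‖ + 1)) ^ 2))
    (.of_forall fun x => Continuous.continuousAt (by fun_prop))
  filter_upwards [Metric.ball_mem_nhds v₀ one_pos] with v hv
  refine .of_forall fun x => ?_
  rw [Real.norm_of_nonneg (sq_nonneg _)]
  refine (norm_sum_ofReal_mul_sq_le x v).trans ?_
  gcongr
  linarith [norm_le_norm_add_norm_sub' v v₀, mem_ball_iff_norm.mp hv]

variable [IsProbabilityMeasure μ]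

theorem measure_sum_ofReal_mul_ne_zero_pos
    (hplane : ∀ w : ι → ℝ, w ≠ 0 → μ {x | ∑ i, w i * x i = 0} < 1) {v : ι → ℂ} (hv : v ≠ 0) :
    0 < μ {x | ∑ i, (x i : ℂ) * v i ≠ 0} := by
  obtain ⟨w, hw, hsub⟩ : ∃ w : ι → ℝ, w ≠ 0 ∧
      {x : ι → ℝ | ∑ i, w i * x i = 0}ᶜ ⊆ {x | ∑ i, (x i : ℂ) * v i ≠ 0} := by
    by_cases hre : (fun i => (v i).re) = 0
    · refine ⟨fun i => (v i).im, fun him => hv (funext fun i => Complex.ext ?_ ?_),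
        fun x hx h => hx ?_⟩
      · exact congrFun hre i
      · exact congrFun him i
      · simpa [mul_comm] using congrArg Complex.im h
    · exact ⟨fun i => (v i).re, hre, fun x hx h =>
        hx (by simpa [mul_comm] using congrArg Complex.re h)⟩
  have hmeas : MeasurableSet {x : ι → ℝ | ∑ i, w i * x i = 0} :=
    (isClosed_eq (by fun_prop) continuous_const).measurableSet
  calc 0 < μ {x | ∑ i, w i * x i = 0}ᶜ := by
        rw [prob_compl_eq_one_sub hmeas]; exact tsub_pos_of_lt (hplane w hw)
    _ ≤ _ := measure_mono hsub

theorem integral_norm_sum_ofReal_mul_sq_pos (hmom : Integrable (fun x => ‖x‖ ^ 2) μ)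
    (hplane : ∀ w : ι → ℝ, w ≠ 0 → μ {x | ∑ i, w i * x i = 0} < 1) {v : ι → ℂ} (hv : v ≠ 0) :
    0 < ∫ x, ‖∑ i, (x i : ℂ) * v i‖ ^ 2 ∂μ := by
  rw [integral_pos_iff_support_of_nonneg (fun x => sq_nonneg _)
    (integrable_norm_sum_ofReal_mul_sq hmom v)]
  convert measure_sum_ofReal_mul_ne_zero_pos hplane hv using 3
  simp [Function.support]

theorem exists_pos_mul_norm_sq_le_integral_norm_sum_ofReal_mul_sq
    (hmom : Integrable (fun x => ‖x‖ ^ 2) μ)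
    (hplane : ∀ w : ι → ℝ, w ≠ 0 → μ {x | ∑ i, w i * x i = 0} < 1) :
    ∃ m > 0, ∀ v : ι → ℂ, m * ‖v‖ ^ 2 ≤ ∫ x, ‖∑ i, (x i : ℂ) * v i‖ ^ 2 ∂μ :=
  exists_pos_mul_norm_sq_le_of_homogeneous (𝕜 := ℂ)
    (continuous_integral_norm_sum_ofReal_mul_sq hmom)
    (fun c v => by
      simp only [Pi.smul_apply, smul_eq_mul, mul_left_comm _ c, ← Finset.mul_sum, norm_mul,
        mul_pow, integral_const_mul])
    fun _ hv => integral_norm_sum_ofReal_mul_sq_pos hmom hplane hv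

end SecondMoment

theorem stmt12_general {d : ℕ} (B : Matrix (Fin d) (Fin d) ℝ) (ρ : ℝ) (N : ℕ)
    (hJordan : ∃ lam : ℂ, lam.re = ρ ∧
      (cplxEnd B).genEigenspace lam (N : ℕ∞)
        ≠ (cplxEnd B).genEigenspace lam ((N - 1 : ℕ) : ℕ∞))
    (μ : Measure (Fin d → ℝ)) [IsProbabilityMeasure μ]
    (hmom : Integrable (fun x => ‖x‖ ^ 2) μ)
    (hplane : ∀ v : Fin d → ℝ, v ≠ 0 → μ {x | ∑ i, v i * x i = 0} < 1) :
    ∃ c > 0, ∃ u : Fin d → ℂ, ∀ t : ℝ, 0 ≤ t →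
      (1 / c) * (1 + t ^ (2 * (N - 1))) * Real.exp (-2 * ρ * t)
        ≤ ∫ x, ‖∑ i, (x i : ℂ)
            * (exp (-(t • (cplxMat B).transpose))).mulVec u i‖ ^ 2 ∂μ := by
  obtain ⟨lam, hlam, hJ⟩ := hJordan
  obtain _ | n := N
  · simp at hJ
  rw [Nat.add_sub_cancel, cplxEnd, Matrix.genEigenspace_toLin'_eq_ker,
    Matrix.genEigenspace_toLin'_eq_ker] at hJ
  obtain ⟨u, hu_top, hu_ne⟩ := Matrix.exists_transpose_pow_mulVec_eq_zero_ne_zero hJ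
  rw [Matrix.transpose_sub, Matrix.transpose_smul, Matrix.transpose_one] at hu_top hu_ne
  have hexp := (cplxMat B)ᵀ.exp_neg_smul_mulVec_of_pow_sub_smul_mulVec_eq_zero lam hu_top
  have hu : u ≠ 0 := fun h => hu_ne (by rw [h, Matrix.mulVec_zero])
  set a : ℕ → Fin d → ℂ := fun k => ((-1) ^ k * (k ! : ℂ)⁻¹) • (((cplxMat B)ᵀ - lam • 1) ^ k *ᵥ u)
  obtain ⟨c, hc, hpoly⟩ := exists_pos_mul_one_add_pow_le_norm_sum_pow_smul_sq a
    (smul_ne_zero (by simp [Nat.factorial_ne_zero]) hu_ne)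
    fun t _ h => Matrix.exp_mulVec_ne_zero _ hu (by rw [hexp t, h, smul_zero])
  obtain ⟨m, hm, hquad⟩ := exists_pos_mul_norm_sq_le_integral_norm_sum_ofReal_mul_sq hmom hplane
  refine ⟨(m * c)⁻¹, by positivity, u, fun t ht => ?_⟩
  have hnorm_exp : ‖Complex.exp (-(t * lam))‖ ^ 2 = Real.exp (-2 * ρ * t) := by
    rw [Complex.norm_exp, sq, ← Real.exp_add, Complex.neg_re, Complex.re_ofReal_mul, hlam]
    ring_nf
  calc 1 / (m * c)⁻¹ * (1 + t ^ (2 * (n + 1 - 1))) * Real.exp (-2 * ρ * t)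
      = m * (Real.exp (-2 * ρ * t) * (c * (1 + t ^ (2 * n)))) := by
        rw [one_div, inv_inv, Nat.add_sub_cancel]; ring
    _ ≤ m * (‖Complex.exp (-(t * lam))‖ ^ 2 * ‖∑ k ∈ range (n + 1), t ^ k • a k‖ ^ 2) := by
      rw [hnorm_exp]; gcongr; exact hpoly t ht
    _ = m * ‖exp (-(t • (cplxMat B)ᵀ)) *ᵥ u‖ ^ 2 := by rw [hexp, norm_smul, mul_pow]
    _ ≤ _ := hquad _

/-- Let `B` have all eigenvalues with real part `≥ ρ`, with some
eigenvalue `λ`, `Re λ = ρ`, having a Jordan block of size `N`.  If `μ` is a probability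
measure on `ℝ^d` with finite nonzero second moment, not concentrated on any hyperplane,
then there are `c > 0` and a vector `u` with
`∫ |xᵀ e^{−tBᵀ} u|² dμ(x) ≥ (1/c)(1 + t^{2(N−1)}) e^{−2ρt}` for all `t ≥ 0`. -/
theorem stmt12 {d : ℕ} (B : Matrix (Fin d) (Fin d) ℝ) (ρ : ℝ) (N : ℕ) (hN : 1 ≤ N)
    (hre : ∀ lam : ℂ, (cplxEnd B).HasEigenvalue lam → ρ ≤ lam.re)
    (hJordan : ∃ lam : ℂ, lam.re = ρ ∧
      (cplxEnd B).genEigenspace lam (N : ℕ∞)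
        ≠ (cplxEnd B).genEigenspace lam ((N - 1 : ℕ) : ℕ∞))
    (μ : Measure (Fin d → ℝ)) [IsProbabilityMeasure μ]
    (hmom : Integrable (fun x => ‖x‖ ^ 2) μ)
    (hmom0 : 0 < ∫ x, ‖x‖ ^ 2 ∂μ)
    (hplane : ∀ v : Fin d → ℝ, v ≠ 0 → μ {x | ∑ i, v i * x i = 0} < 1) :
    ∃ c > 0, ∃ u : Fin d → ℂ, ∀ t : ℝ, 0 ≤ t →
      (1 / c) * (1 + t ^ (2 * (N - 1))) * Real.exp (-2 * ρ * t)
        ≤ ∫ x, ‖∑ i, (x i : ℂ)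
            * (exp (-(t • (cplxMat B).transpose))).mulVec u i‖ ^ 2 ∂μ :=
  stmt12_general B ρ N hJordan μ hmom hplane
end

section
/- Let G = {0,…,N} be a finite irreducible non-oriented graph with positive edge weights λ_{ij} = λ_{ji}, and let L_G h(i) = Σ_{j∼i} λ_{ij}(h(j) − h(i)) be the weighted graph Laplacian. Let b: ℝ^{(N+1)d} → ℝ^{(N+1)d} be the drift b_i(x) = Σ_{j∼i} ∇W_{ij}(x_i − x_j), where each W_{ij} = W_{ji} is even and satisfies ∇²W_{ij} ≥ λ_{ij} I. Then for every smooth f: ℝ^{(N+1)d} → ℝ, (∇f)ᵀ J_b ∇f ≥ Σ_{(i,j)∈E} λ_{ij}|(∇_{x_i} − ∇_{x_j})f|² = −(∇f)ᵀ L_G ∇f, where L_G acts blockwise on the gradient (∇_{x_0}f,…,∇_{x_N}f). -/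
section AuxStmt13

variable {N d : ℕ}

lemma grad_coord_stmt13 (g : EuclideanSpace ℝ (Fin d) → ℝ) (z : EuclideanSpace ℝ (Fin d)) (l : Fin d) :
    gradient g z l = fderiv ℝ g z (EuclideanSpace.single l 1) := by
  have h : (inner ℝ ((InnerProductSpace.toDual ℝ (EuclideanSpace ℝ (Fin d))).symm (fderiv ℝ g z))
      (EuclideanSpace.single l (1:ℝ)) : ℝ) = fderiv ℝ g z (EuclideanSpace.single l 1) :=
    InnerProductSpace.toDual_symm_apply
  rw [gradient, ← h, EuclideanSpace.inner_single_right]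
  simp

lemma second_deriv_apply_stmt13 (W : EuclideanSpace ℝ (Fin d) → ℝ) (hW : ContDiff ℝ (⊤ : ℕ∞) W)
    (z v u : EuclideanSpace ℝ (Fin d)) :
    fderiv ℝ (fun w => fderiv ℝ W w v) z u = fderiv ℝ (fderiv ℝ W) z u v := by
  have hd : DifferentiableAt ℝ (fderiv ℝ W) z :=
    ((hW.fderiv_right (m := 1) ((by exact WithTop.coe_le_coe.mpr le_top))).differentiable one_ne_zero).differentiableAt
  have := fderiv_clm_apply (𝕜 := ℝ) hd (differentiableAt_const v)
  simp [this]

lemma fderiv_even_neg_stmt13 (W : EuclideanSpace ℝ (Fin d) → ℝ) (hW : ContDiff ℝ (⊤ : ℕ∞) W)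
    (he : ∀ z, W (-z) = W z) : ∀ z, fderiv ℝ W z = -(fderiv ℝ W (-z)) := by
  intro z
  have hneg : HasFDerivAt (fun y : EuclideanSpace ℝ (Fin d) => -y)
      (-(ContinuousLinearMap.id ℝ (EuclideanSpace ℝ (Fin d)))) z := (hasFDerivAt_id z).neg
  have hd : HasFDerivAt W (fderiv ℝ W (-z)) (-z) :=
    ((hW.differentiable (by simp)) (-z)).hasFDerivAt
  have h1 : HasFDerivAt (fun y : EuclideanSpace ℝ (Fin d) => W (-y))
      ((fderiv ℝ W (-z)).comp (-(ContinuousLinearMap.id ℝ (EuclideanSpace ℝ (Fin d))))) z :=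
    hd.comp z hneg
  rw [funext he] at h1
  rw [h1.fderiv]; ext u; simp

lemma snd_fderiv_even_stmt13 (W : EuclideanSpace ℝ (Fin d) → ℝ) (hW : ContDiff ℝ (⊤ : ℕ∞) W)
    (he : ∀ z, W (-z) = W z) (z : EuclideanSpace ℝ (Fin d)) :
    fderiv ℝ (fderiv ℝ W) (-z) = fderiv ℝ (fderiv ℝ W) z := by
  have hG : Differentiable ℝ (fderiv ℝ W) :=
    (hW.fderiv_right (m := 1) (by exact WithTop.coe_le_coe.mpr le_top)).differentiable one_ne_zero
  have hneg : HasFDerivAt (fun y : EuclideanSpace ℝ (Fin d) => -y)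
      (-(ContinuousLinearMap.id ℝ (EuclideanSpace ℝ (Fin d)))) z := (hasFDerivAt_id z).neg
  have h1 : HasFDerivAt (fun y : EuclideanSpace ℝ (Fin d) => fderiv ℝ W (-y))
      ((fderiv ℝ (fderiv ℝ W) (-z)).comp (-(ContinuousLinearMap.id ℝ (EuclideanSpace ℝ (Fin d))))) z :=
    (hG (-z)).hasFDerivAt.comp z hneg
  have h2 := h1.fun_neg
  have h3 : (fun y : EuclideanSpace ℝ (Fin d) => -(fderiv ℝ W (-y))) = fderiv ℝ W := by
    funext y
    rw [fderiv_even_neg_stmt13 W hW he y]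
  rw [h3] at h2
  rw [h2.fderiv]
  ext u
  simp

lemma bderiv_stmt13 (Adj : Fin (N + 1) → Fin (N + 1) → Prop) [DecidableRel Adj]
    (W : Fin (N + 1) → Fin (N + 1) → EuclideanSpace ℝ (Fin d) → ℝ)
    (hWsmooth : ∀ i j, ContDiff ℝ (⊤ : ℕ∞) (W i j))
    (b : (Fin (N + 1) → EuclideanSpace ℝ (Fin d)) → Fin (N + 1) → EuclideanSpace ℝ (Fin d))
    (hb : ∀ x i, b x i = ∑ j, if Adj i j then gradient (W i j) (x i - x j) else 0)
    (x u : Fin (N + 1) → EuclideanSpace ℝ (Fin d)) (j : Fin (N + 1)) (l : Fin d) :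
    fderiv ℝ (fun y => b y j l) x u
      = ∑ m, if Adj j m then
          fderiv ℝ (fderiv ℝ (W j m)) (x j - x m) (u j - u m) (EuclideanSpace.single l 1)
        else 0 := by
  have hfun : (fun y : Fin (N + 1) → EuclideanSpace ℝ (Fin d) => b y j l)
      = fun y => ∑ m, if Adj j m then fderiv ℝ (W j m) (y j - y m) (EuclideanSpace.single l 1) else 0 := by
    funext y
    rw [hb, WithLp.ofLp_sum, Finset.sum_apply]
    refine Finset.sum_congr rfl fun m _ => ?_
    by_cases h : Adj j m <;> simp [h, grad_coord_stmt13]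
  have key : HasFDerivAt (𝕜 := ℝ)
      (fun y : Fin (N + 1) → EuclideanSpace ℝ (Fin d) =>
        ∑ m, if Adj j m then fderiv ℝ (W j m) (y j - y m) (EuclideanSpace.single l 1) else 0)
      (∑ m, if Adj j m then
        (((fderiv ℝ (fderiv ℝ (W j m)) (x j - x m)).flip (EuclideanSpace.single l 1)).comp
          (ContinuousLinearMap.proj (R := ℝ) (φ := fun _ : Fin (N+1) => EuclideanSpace ℝ (Fin d)) j
            - ContinuousLinearMap.proj m))
        else 0) x := by
    apply HasFDerivAt.fun_sum
    intro m _
    by_cases h : Adj j m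
    · simp only [if_pos h]
      set L : (Fin (N + 1) → EuclideanSpace ℝ (Fin d)) →L[ℝ] EuclideanSpace ℝ (Fin d) :=
        ContinuousLinearMap.proj (R := ℝ) (φ := fun _ : Fin (N+1) => EuclideanSpace ℝ (Fin d)) j
          - ContinuousLinearMap.proj m with hL
      have hG : Differentiable ℝ (fderiv ℝ (W j m)) :=
        ((hWsmooth j m).fderiv_right (m := 1) (by exact WithTop.coe_le_coe.mpr le_top)).differentiable one_ne_zero
      have hψ : HasFDerivAt (fun z => fderiv ℝ (W j m) z (EuclideanSpace.single l (1:ℝ)))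
          ((fderiv ℝ (fderiv ℝ (W j m)) (x j - x m)).flip (EuclideanSpace.single l 1)) (x j - x m) := by
        have h1 := (hG (x j - x m)).hasFDerivAt.clm_apply
          (hasFDerivAt_const (EuclideanSpace.single l (1:ℝ)) (x j - x m))
        simpa using h1
      have hcomp := hψ.comp x L.hasFDerivAt
      simpa [Function.comp_def, Pi.sub_apply, hL] using hcomp
    · simp only [if_neg h]
      exact hasFDerivAt_const 0 x
  rw [hfun, key.fderiv, ContinuousLinearMap.sum_apply]
  refine Finset.sum_congr rfl fun m _ => ?_
  by_cases h : Adj j m <;> simp [h]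

lemma euc_sum_apply_stmt13 {ι : Type*} [Fintype ι] (w : ι → EuclideanSpace ℝ (Fin d)) (k : Fin d) :
    (∑ i, w i) k = ∑ i, w i k :=
  by rw [WithLp.ofLp_sum, Finset.sum_apply]

lemma swap4_stmt13 {α β γ δ : Type*} [Fintype α] [Fintype β] [Fintype γ] [Fintype δ]
    (F : α → β → γ → δ → ℝ) :
    ∑ i, ∑ k, ∑ j, ∑ l, F i k j l = ∑ j, ∑ l, ∑ i, ∑ k, F i k j l := by
  calc ∑ i, ∑ k, ∑ j, ∑ l, F i k j l
      = ∑ i, ∑ j, ∑ k, ∑ l, F i k j l :=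
        Finset.sum_congr rfl fun i _ => Finset.sum_comm
    _ = ∑ j, ∑ i, ∑ k, ∑ l, F i k j l := Finset.sum_comm
    _ = ∑ j, ∑ i, ∑ l, ∑ k, F i k j l :=
        Finset.sum_congr rfl fun j _ => Finset.sum_congr rfl fun i _ => Finset.sum_comm
    _ = ∑ j, ∑ l, ∑ i, ∑ k, F i k j l :=
        Finset.sum_congr rfl fun j _ => Finset.sum_comm

end AuxStmt13

/-- Partial derivative of `g : (ℝ^d)^{N+1} → ℝ` in the `k`-th coordinate of block `i`. -/
noncomputable def pdb {N d : ℕ} (i : Fin (N + 1)) (k : Fin d)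
    (g : (Fin (N + 1) → EuclideanSpace ℝ (Fin d)) → ℝ)
    (x : Fin (N + 1) → EuclideanSpace ℝ (Fin d)) : ℝ :=
  fderiv ℝ g x (Pi.single i (EuclideanSpace.single k 1))

/-- For the interaction drift `b_i(x) = Σ_{j∼i} ∇W_{ij}(x_i − x_j)` on a
finite graph with even potentials satisfying `∇²W_{ij} ≥ λ_{ij} I`, one has for every
smooth `f`: `(∇f)ᵀ J_b ∇f ≥ Σ_{(i,j)∈E} λ_{ij}|(∇_{x_i} − ∇_{x_j})f|² = −(∇f)ᵀ L_G ∇f`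
(the edge sums below count each non-oriented edge once, i.e. carry a factor `1/2` over
ordered pairs). -/
theorem stmt13 {N d : ℕ}
    (Adj : Fin (N + 1) → Fin (N + 1) → Prop) [DecidableRel Adj]
    (hAdjSymm : ∀ i j, Adj i j → Adj j i)
    (hAdjIrrefl : ∀ i, ¬Adj i i)
    (lam : Fin (N + 1) → Fin (N + 1) → ℝ)
    (hlamSymm : ∀ i j, lam i j = lam j i)
    (hlampos : ∀ i j, Adj i j → 0 < lam i j)
    (W : Fin (N + 1) → Fin (N + 1) → EuclideanSpace ℝ (Fin d) → ℝ)
    (hWsymm : ∀ i j, W i j = W j i)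
    (hWsmooth : ∀ i j, ContDiff ℝ (⊤ : ℕ∞) (W i j))
    (hWeven : ∀ i j z, W i j (-z) = W i j z)
    -- `∇²W_{ij} ≥ λ_{ij}` as quadratic forms
    (hWconv : ∀ i j, Adj i j → ∀ z v : EuclideanSpace ℝ (Fin d),
      lam i j * ‖v‖ ^ 2 ≤ fderiv ℝ (fun w => fderiv ℝ (W i j) w v) z v)
    (b : (Fin (N + 1) → EuclideanSpace ℝ (Fin d)) → Fin (N + 1) → EuclideanSpace ℝ (Fin d))
    (hb : ∀ x i, b x i = ∑ j, if Adj i j then gradient (W i j) (x i - x j) else 0)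
    (f : (Fin (N + 1) → EuclideanSpace ℝ (Fin d)) → ℝ) (hf : ContDiff ℝ (⊤ : ℕ∞) f)
    (x : Fin (N + 1) → EuclideanSpace ℝ (Fin d)) :
    -- the edge sum bounds the Jacobian quadratic form from below …
    ((1 : ℝ) / 2) * (∑ i, ∑ j, if Adj i j then
        lam i j * ∑ k, (pdb i k f x - pdb j k f x) ^ 2 else 0)
      ≤ ∑ i, ∑ k, ∑ j, ∑ l, pdb i k f x * pdb i k (fun y => b y j l) x * pdb j l f x
    ∧ -- … and equals `−(∇f)ᵀ L_G ∇f` with `L_G` acting blockwise on the gradient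
    ((1 : ℝ) / 2) * (∑ i, ∑ j, if Adj i j then
        lam i j * ∑ k, (pdb i k f x - pdb j k f x) ^ 2 else 0)
      = -∑ i, ∑ j, if Adj i j then
          lam i j * ∑ k, pdb i k f x * (pdb j k f x - pdb i k f x) else 0 := by
  classical
  set V : Fin (N + 1) → EuclideanSpace ℝ (Fin d) :=
    fun j => ∑ k, pdb j k f x • (EuclideanSpace.single k 1 : EuclideanSpace ℝ (Fin d)) with hVdef
  set Hm : Fin (N + 1) → Fin (N + 1) →
      (EuclideanSpace ℝ (Fin d) →L[ℝ] EuclideanSpace ℝ (Fin d) →L[ℝ] ℝ) :=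
    fun j m => fderiv ℝ (fderiv ℝ (W j m)) (x j - x m) with hHdef
  -- coordinates of V
  have hVcoord : ∀ j k', V j k' = pdb j k' f x := by
    intro j k'
    rw [hVdef]
    simp [euc_sum_apply_stmt13, EuclideanSpace.single_apply, smul_eq_mul, mul_ite,
      Finset.sum_ite_eq, PiLp.smul_apply]
  have hVsub : ∀ j m k', (V j - V m) k' = pdb j k' f x - pdb m k' f x := by
    intro j m k'
    have : (V j - V m) k' = V j k' - V m k' := rfl
    rw [this, hVcoord, hVcoord]
  have hnorm : ∀ j m, ‖V j - V m‖ ^ 2 = ∑ k, (pdb j k f x - pdb m k f x) ^ 2 := by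
    intro j m
    rw [EuclideanSpace.norm_eq, Real.sq_sqrt (by positivity)]
    exact Finset.sum_congr rfl fun k _ => by rw [hVsub, Real.norm_eq_abs, sq_abs]
  -- part 2 : algebraic identity
  have hneg : (-∑ i, ∑ j, if Adj i j then
        lam i j * ∑ k, pdb i k f x * (pdb j k f x - pdb i k f x) else 0)
      = ∑ i, ∑ j, if Adj i j then
        lam i j * ∑ k, pdb i k f x * (pdb i k f x - pdb j k f x) else 0 := by
    rw [← Finset.sum_neg_distrib]
    refine Finset.sum_congr rfl fun i _ => ?_
    rw [← Finset.sum_neg_distrib]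
    refine Finset.sum_congr rfl fun j _ => ?_
    by_cases h : Adj i j
    · simp only [if_pos h]
      rw [← mul_neg, ← Finset.sum_neg_distrib]
      congr 1
      exact Finset.sum_congr rfl fun k _ => by ring
    · simp [h]
  have hswap2 : (∑ i, ∑ j, if Adj i j then
        lam i j * ∑ k, pdb i k f x * (pdb i k f x - pdb j k f x) else 0)
      = ∑ i, ∑ j, if Adj i j then
        lam i j * ∑ k, pdb j k f x * (pdb j k f x - pdb i k f x) else 0 := by
    rw [Finset.sum_comm]
    refine Finset.sum_congr rfl fun i _ => Finset.sum_congr rfl fun j _ => ?_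
    by_cases h : Adj i j
    · rw [if_pos (hAdjSymm i j h), if_pos h, hlamSymm j i]
    · rw [if_neg fun hh => h (hAdjSymm j i hh), if_neg h]
  have hcomb : (∑ i, ∑ j, if Adj i j then
        lam i j * ∑ k, (pdb i k f x - pdb j k f x) ^ 2 else 0)
      = (∑ i, ∑ j, if Adj i j then
          lam i j * ∑ k, pdb i k f x * (pdb i k f x - pdb j k f x) else 0)
        + ∑ i, ∑ j, if Adj i j then
          lam i j * ∑ k, pdb j k f x * (pdb j k f x - pdb i k f x) else 0 := by
    rw [← Finset.sum_add_distrib]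
    refine Finset.sum_congr rfl fun i _ => ?_
    rw [← Finset.sum_add_distrib]
    refine Finset.sum_congr rfl fun j _ => ?_
    by_cases h : Adj i j
    · simp only [if_pos h]
      rw [← mul_add, ← Finset.sum_add_distrib]
      congr 1
      exact Finset.sum_congr rfl fun k _ => by ring
    · simp [h]
  have part2 : ((1 : ℝ) / 2) * (∑ i, ∑ j, if Adj i j then
        lam i j * ∑ k, (pdb i k f x - pdb j k f x) ^ 2 else 0)
      = -∑ i, ∑ j, if Adj i j then
          lam i j * ∑ k, pdb i k f x * (pdb j k f x - pdb i k f x) else 0 := by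
    rw [hneg, hcomb, hswap2]; ring
  refine ⟨?_, part2⟩
  -- part 1 : the inequality
  -- the direction vector
  set u0 : Fin (N + 1) → EuclideanSpace ℝ (Fin d) :=
    ∑ i, ∑ k, pdb i k f x •
      (Pi.single i (EuclideanSpace.single k 1) : Fin (N + 1) → EuclideanSpace ℝ (Fin d))
    with hu0def
  have hu0 : ∀ j, u0 j = V j := by
    intro j
    rw [hu0def, hVdef]
    simp [Finset.sum_apply, Pi.single_apply, apply_ite, Finset.sum_ite_eq,
      Finset.sum_ite_irrel, smul_eq_mul]
  have hsum_fderiv : ∀ j l, (∑ i, ∑ k, pdb i k f x * pdb i k (fun y => b y j l) x)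
      = fderiv ℝ (fun y => b y j l) x u0 := by
    intro j l
    rw [hu0def, map_sum]
    refine Finset.sum_congr rfl fun i _ => ?_
    rw [map_sum]
    refine Finset.sum_congr rfl fun k _ => ?_
    rw [map_smul, smul_eq_mul]
    rfl
  have hmain : (∑ i, ∑ k, ∑ j, ∑ l, pdb i k f x * pdb i k (fun y => b y j l) x * pdb j l f x)
      = ∑ j, ∑ m, if Adj j m then Hm j m (V j - V m) (V j) else 0 := by
    rw [swap4_stmt13]
    refine Finset.sum_congr rfl fun j _ => ?_
    calc ∑ l, ∑ i, ∑ k, pdb i k f x * pdb i k (fun y => b y j l) x * pdb j l f x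
        = ∑ l, (fderiv ℝ (fun y => b y j l) x u0) * pdb j l f x := by
          refine Finset.sum_congr rfl fun l _ => ?_
          rw [← hsum_fderiv j l, Finset.sum_mul]
          refine Finset.sum_congr rfl fun i _ => ?_
          rw [Finset.sum_mul]
      _ = ∑ l, (∑ m, if Adj j m then Hm j m (V j - V m) (EuclideanSpace.single l 1) else 0)
            * pdb j l f x := by
          refine Finset.sum_congr rfl fun l _ => ?_
          rw [bderiv_stmt13 Adj W hWsmooth b hb x u0 j l]
          congr 1
          refine Finset.sum_congr rfl fun m _ => ?_
          by_cases h : Adj j m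
          · simp only [if_pos h, hHdef, hu0]
          · simp [h]
      _ = ∑ l, ∑ m, (if Adj j m then Hm j m (V j - V m) (EuclideanSpace.single l 1) else 0)
            * pdb j l f x := Finset.sum_congr rfl fun l _ => Finset.sum_mul _ _ _
      _ = ∑ m, ∑ l, (if Adj j m then Hm j m (V j - V m) (EuclideanSpace.single l 1) else 0)
            * pdb j l f x := Finset.sum_comm
      _ = ∑ m, if Adj j m then Hm j m (V j - V m) (V j) else 0 := by
          refine Finset.sum_congr rfl fun m _ => ?_
          by_cases h : Adj j m
          · simp only [if_pos h]
            rw [hVdef]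
            simp only [map_sum, map_smul, smul_eq_mul]
            exact Finset.sum_congr rfl fun l _ => by ring
          · simp [h]
  have hHsymm : ∀ j m, Hm m j = Hm j m := by
    intro j m
    simp only [hHdef]
    rw [hWsymm m j, show x m - x j = -(x j - x m) by abel]
    exact snd_fderiv_even_stmt13 (W j m) (hWsmooth j m) (hWeven j m) (x j - x m)
  have hswapT : (∑ j, ∑ m, if Adj j m then Hm j m (V j - V m) (V j) else 0)
      = ∑ j, ∑ m, if Adj j m then Hm j m (V m - V j) (V m) else 0 := by
    rw [Finset.sum_comm]
    refine Finset.sum_congr rfl fun j _ => Finset.sum_congr rfl fun m _ => ?_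
    by_cases h : Adj j m
    · rw [if_pos (hAdjSymm j m h), if_pos h, hHsymm j m]
    · rw [if_neg fun hh => h (hAdjSymm m j hh), if_neg h]
  have hdouble : (∑ j, ∑ m, if Adj j m then Hm j m (V j - V m) (V j) else 0)
        + (∑ j, ∑ m, if Adj j m then Hm j m (V m - V j) (V m) else 0)
      = ∑ j, ∑ m, if Adj j m then Hm j m (V j - V m) (V j - V m) else 0 := by
    rw [← Finset.sum_add_distrib]
    refine Finset.sum_congr rfl fun j _ => ?_
    rw [← Finset.sum_add_distrib]
    refine Finset.sum_congr rfl fun m _ => ?_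
    by_cases h : Adj j m
    · simp only [if_pos h]
      rw [show V m - V j = -(V j - V m) by abel]
      simp only [map_neg, map_sub, ContinuousLinearMap.neg_apply,
        ContinuousLinearMap.sub_apply]
      ring
    · simp [h]
  have hlow : ∀ j m, Adj j m → lam j m * ∑ k, (pdb j k f x - pdb m k f x) ^ 2
      ≤ Hm j m (V j - V m) (V j - V m) := by
    intro j m h
    have h1 := hWconv j m h (x j - x m) (V j - V m)
    rw [second_deriv_apply_stmt13 (W j m) (hWsmooth j m)] at h1
    calc lam j m * ∑ k, (pdb j k f x - pdb m k f x) ^ 2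
        = lam j m * ‖V j - V m‖ ^ 2 := by rw [hnorm]
      _ ≤ _ := by simpa only [hHdef] using h1
  have h2T : (∑ i, ∑ j, if Adj i j then lam i j * ∑ k, (pdb i k f x - pdb j k f x) ^ 2 else 0)
      ≤ ∑ j, ∑ m, if Adj j m then Hm j m (V j - V m) (V j - V m) else 0 := by
    refine Finset.sum_le_sum fun i _ => Finset.sum_le_sum fun j _ => ?_
    by_cases h : Adj i j
    · simpa [h] using hlow i j h
    · simp [h]
  rw [hmain]
  linarith [h2T, hswapT, hdouble]
end
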